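/- arXiv:0812.1719 — 5 statements merged into one kernel-verified Lean document; each statement's English description precedes it below -/
import Mathlib

section
/- Let X be a real random variable such that E[exp(R X²)] ≤ K for some constants K, R > 0. Then for all t > 0, E[exp(t|X|)] ≤ 1 + (K√π/(2√R)) t exp(t²/(4R)). If additionally E[X] ≤ 0, then there exists a > 0, depending only on K and R, such that E[exp(tX)] ≤ exp(a t²/2) for all t > 0. -/
/-!
For `τ ≥ 0` and `c = √π / 2` one has `exp (τ s) ≤ 1 + c τ exp (τ² / 4 + s²)`: if `c τ ≥ 1` this is
Young's inequality `τ s ≤ τ² / 4 + s²`; otherwise combine `eˣ - 1 ≤ x eˣ` with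
`s ≤ c exp ((s - τ/2)²)`, which holds because `4 c² ≥ 3`. Substituting `s = √R |X|` and integrating
gives the first bound.

For the second, if `t² ≤ R` then `eˣ ≤ x + exp (x²)` and convexity of `exp` (with weight `t² / R`)
give `exp (t X) ≤ t X + 1 + (t² / R) exp (R X²)`, so `E exp (t X) ≤ 1 + K t² / R` because
`E X ≤ 0`. If `t² > R`, Young's inequality gives `E exp (t X) ≤ K exp (t² / (4R))` and `K` is
absorbed into `exp (K t² / R)`. Both cases are covered by `a = (4K + 1) / (2R)`.
-/

open MeasureTheory Real ENNReal

theorem mul_le_sq_div_add_mul_sq {α : Type*} [Field α] [LinearOrder α] [IsStrictOrderedRing α]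
    {R : α} (hR : 0 < R) (t x : α) : t * x ≤ t ^ 2 / (4 * R) + R * x ^ 2 := by
  rw [div_add' _ _ _ (by positivity), le_div_iff₀ (by positivity)]
  nlinarith [sq_nonneg (t - 2 * R * x)]

namespace Real

theorem exp_le_add_exp_sq (x : ℝ) : exp x ≤ x + exp (x ^ 2) := by
  rcases le_or_gt |x| 1 with hx | hx
  · linarith [(abs_le.mp (abs_exp_sub_one_sub_id_le hx)).2, add_one_le_exp (x ^ 2)]
  rcases lt_abs.mp hx with hx | hx
  · linarith [exp_le_exp.mpr (by nlinarith : x ≤ x ^ 2)]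
  · linarith [add_one_le_exp (x ^ 2), exp_le_one_iff.mpr (by linarith : x ≤ 0),
      (by nlinarith : 0 ≤ x + x ^ 2)]

theorem exp_mul_le_one_add_mul_exp {l : ℝ} (y : ℝ) (h0 : 0 ≤ l) (h1 : l ≤ 1) :
    exp (l * y) ≤ 1 + l * exp y := by
  have h := convexOn_exp.2 (Set.mem_univ y) (Set.mem_univ 0) h0 (sub_nonneg.mpr h1) (by ring)
  simp only [smul_eq_mul, mul_zero, add_zero, exp_zero, mul_one] at h
  linarith

theorem exp_sub_one_le_mul_exp (x : ℝ) : exp x - 1 ≤ x * exp x := by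
  have h := add_one_le_exp (-x)
  have h' : exp (-x) * exp x = 1 := by rw [← exp_add]; simp
  nlinarith [exp_pos x]

theorem exp_mul_le_one_add_mul_exp_add_sq {c τ : ℝ} (s : ℝ) (hc : 3 ≤ 4 * c ^ 2) (hc0 : 0 ≤ c)
    (hτ : 0 ≤ τ) : exp (τ * s) ≤ 1 + c * τ * exp (τ ^ 2 / 4 + s ^ 2) := by
  have hsplit : τ * s + (s - τ / 2) ^ 2 = τ ^ 2 / 4 + s ^ 2 := by ring
  rcases le_or_gt 1 (c * τ) with hbig | hsmall
  · calc exp (τ * s) ≤ exp (τ ^ 2 / 4 + s ^ 2) :=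
          exp_le_exp.mpr (by nlinarith [sq_nonneg (τ / 2 - s)])
      _ ≤ c * τ * exp (τ ^ 2 / 4 + s ^ 2) := le_mul_of_one_le_left (exp_pos _).le hbig
      _ ≤ 1 + c * τ * exp (τ ^ 2 / 4 + s ^ 2) := le_add_of_nonneg_left zero_le_one
  · -- `(2cu - 1)² + 4c² - 1 - 2cτ ≥ 0` is `4c` times the claim, with `u = s - τ/2`
    have hs : s ≤ c * ((s - τ / 2) ^ 2 + 1) := by
      nlinarith [sq_nonneg (2 * c * (s - τ / 2) - 1)]
    have hs' : s ≤ c * exp ((s - τ / 2) ^ 2) :=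
      hs.trans (by gcongr; linarith [add_one_le_exp ((s - τ / 2) ^ 2)])
    calc exp (τ * s) ≤ 1 + τ * s * exp (τ * s) := by linarith [exp_sub_one_le_mul_exp (τ * s)]
      _ ≤ 1 + τ * (c * exp ((s - τ / 2) ^ 2)) * exp (τ * s) := by gcongr
      _ = 1 + c * τ * exp (τ ^ 2 / 4 + s ^ 2) := by
        rw [← hsplit, exp_add]; ring

theorem exp_mul_le_one_add_mul_exp_div_add_mul_sq {c R t : ℝ} (x : ℝ) (hc : 3 ≤ 4 * c ^ 2)
    (hc0 : 0 ≤ c) (hR : 0 < R) (ht : 0 ≤ t) :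
    exp (t * x) ≤ 1 + c / √R * t * exp (t ^ 2 / (4 * R) + R * x ^ 2) := by
  have hsR : 0 < √R := sqrt_pos.mpr hR
  calc exp (t * x) = exp (t / √R * (√R * x)) := by field_simp
    _ ≤ 1 + c * (t / √R) * exp ((t / √R) ^ 2 / 4 + (√R * x) ^ 2) :=
      exp_mul_le_one_add_mul_exp_add_sq _ hc hc0 (by positivity)
    _ = 1 + c / √R * t * exp (t ^ 2 / (4 * R) + R * x ^ 2) := by
      rw [div_pow, mul_pow, sq_sqrt hR.le, div_div, mul_comm R 4]; ring

end Real

section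

variable {Ω : Type*} [MeasurableSpace Ω] {μ : Measure Ω}

theorem lintegral_ofReal_le_ofReal_add_mul [IsProbabilityMeasure μ] {f g : Ω → ℝ}
    {A B K : ℝ} (hA : 0 ≤ A) (hB : 0 ≤ B) (hK : 0 ≤ K) (hfg : ∀ ω, f ω ≤ B + A * g ω)
    (hg : ∫⁻ ω, ENNReal.ofReal (g ω) ∂μ ≤ ENNReal.ofReal K) :
    ∫⁻ ω, ENNReal.ofReal (f ω) ∂μ ≤ ENNReal.ofReal (B + A * K) :=
  calc ∫⁻ ω, ENNReal.ofReal (f ω) ∂μ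
      ≤ ∫⁻ ω, ENNReal.ofReal B + ENNReal.ofReal A * ENNReal.ofReal (g ω) ∂μ :=
        lintegral_mono fun ω => (ofReal_le_ofReal (hfg ω)).trans <|
          ofReal_add_le.trans_eq (by rw [ofReal_mul hA])
    _ = ENNReal.ofReal B + ENNReal.ofReal A * ∫⁻ ω, ENNReal.ofReal (g ω) ∂μ := by
        rw [lintegral_add_left measurable_const, lintegral_const, measure_univ, mul_one,
          lintegral_const_mul' _ _ ofReal_ne_top]
    _ ≤ ENNReal.ofReal (B + A * K) := by
        rw [ofReal_add hB (by positivity), ofReal_mul hA]; gcongr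

theorem integrable_of_lintegral_ofReal_le {g : Ω → ℝ} {K : ℝ} (hgm : AEStronglyMeasurable g μ)
    (hg0 : ∀ ω, 0 ≤ g ω) (hg : ∫⁻ ω, ENNReal.ofReal (g ω) ∂μ ≤ ENNReal.ofReal K) :
    Integrable g μ :=
  ⟨hgm, (hasFiniteIntegral_iff_ofReal (.of_forall hg0)).mpr (hg.trans_lt ofReal_lt_top)⟩

theorem lintegral_ofReal_le_of_le_mul_add {X f h : Ω → ℝ} {s : ℝ} (hX : Integrable X μ)
    (hmean : ∫ ω, X ω ∂μ ≤ 0) (hs : 0 ≤ s) (hfm : AEStronglyMeasurable f μ) (hf0 : ∀ ω, 0 ≤ f ω)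
    (hh : Integrable h μ) (hh0 : ∀ ω, 0 ≤ h ω) (hfh : ∀ ω, f ω ≤ s * X ω + h ω) :
    ∫⁻ ω, ENNReal.ofReal (f ω) ∂μ ≤ ∫⁻ ω, ENNReal.ofReal (h ω) ∂μ := by
  have hsXh : Integrable (fun ω => s * X ω + h ω) μ := (hX.const_mul s).add hh
  have hf : Integrable f μ :=
    hsXh.mono' hfm (.of_forall fun ω => by rw [norm_of_nonneg (hf0 ω)]; exact hfh ω)
  rw [← ofReal_integral_eq_lintegral_ofReal hf (.of_forall hf0),
    ← ofReal_integral_eq_lintegral_ofReal hh (.of_forall hh0)]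
  refine ofReal_le_ofReal ((integral_mono hf hsXh hfh).trans ?_)
  rw [integral_add (hX.const_mul s) hh, integral_const_mul]
  nlinarith

variable [IsProbabilityMeasure μ] {X : Ω → ℝ} {K R t : ℝ}

theorem lintegral_exp_mul_abs_le (hK : 0 ≤ K) (hR : 0 < R) (ht : 0 ≤ t)
    (hXK : ∫⁻ ω, ENNReal.ofReal (exp (R * X ω ^ 2)) ∂μ ≤ ENNReal.ofReal K) :
    ∫⁻ ω, ENNReal.ofReal (exp (t * |X ω|)) ∂μ ≤
      ENNReal.ofReal (1 + K * √π / (2 * √R) * t * exp (t ^ 2 / (4 * R))) := by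
  have hc : 3 ≤ 4 * (√π / 2) ^ 2 := by
    rw [div_pow, sq_sqrt pi_pos.le]; linarith [pi_gt_three]
  refine (lintegral_ofReal_le_ofReal_add_mul (by positivity) zero_le_one hK (fun ω => ?_) hXK
    (A := √π / 2 / √R * t * exp (t ^ 2 / (4 * R)))).trans_eq (by ring_nf)
  have h := exp_mul_le_one_add_mul_exp_div_add_mul_sq |X ω| hc (by positivity) hR ht
  rwa [sq_abs, exp_add, ← mul_assoc] at h

theorem lintegral_exp_mul_le_exp_div_mul (hK : 0 ≤ K) (hR : 0 < R)
    (hXK : ∫⁻ ω, ENNReal.ofReal (exp (R * X ω ^ 2)) ∂μ ≤ ENNReal.ofReal K) :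
    ∫⁻ ω, ENNReal.ofReal (exp (t * X ω)) ∂μ ≤ ENNReal.ofReal (exp (t ^ 2 / (4 * R)) * K) := by
  refine (lintegral_ofReal_le_ofReal_add_mul (by positivity) le_rfl hK (fun ω => ?_) hXK
    (A := exp (t ^ 2 / (4 * R))) (B := 0)).trans_eq (by rw [zero_add])
  rw [zero_add, ← exp_add]
  exact exp_le_exp.mpr (mul_le_sq_div_add_mul_sq hR t (X ω))

theorem lintegral_exp_mul_le_one_add_of_sq_le (hK : 0 ≤ K) (hR : 0 < R) (ht : 0 ≤ t) (htR : t ^ 2 ≤ R)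
    (hX : Integrable X μ) (hmean : ∫ ω, X ω ∂μ ≤ 0)
    (hXK : ∫⁻ ω, ENNReal.ofReal (exp (R * X ω ^ 2)) ∂μ ≤ ENNReal.ofReal K) :
    ∫⁻ ω, ENNReal.ofReal (exp (t * X ω)) ∂μ ≤ ENNReal.ofReal (1 + t ^ 2 / R * K) := by
  have hl : 0 ≤ t ^ 2 / R := by positivity
  have hg : Integrable (fun ω => exp (R * X ω ^ 2)) μ :=
    integrable_of_lintegral_ofReal_le
      (continuous_exp.comp_aestronglyMeasurable ((hX.1.pow 2).const_mul R))
      (fun ω => (exp_pos _).le) hXK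
  have hpt : ∀ ω, exp (t * X ω) ≤ t * X ω + (1 + t ^ 2 / R * exp (R * X ω ^ 2)) := fun ω =>
    calc exp (t * X ω) ≤ t * X ω + exp (t ^ 2 / R * (R * X ω ^ 2)) := by
          convert exp_le_add_exp_sq (t * X ω) using 3; field_simp
      _ ≤ t * X ω + (1 + t ^ 2 / R * exp (R * X ω ^ 2)) := by
          gcongr; exact exp_mul_le_one_add_mul_exp _ hl ((div_le_one hR).mpr htR)
  calc ∫⁻ ω, ENNReal.ofReal (exp (t * X ω)) ∂μ
      ≤ ∫⁻ ω, ENNReal.ofReal (1 + t ^ 2 / R * exp (R * X ω ^ 2)) ∂μ :=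
        lintegral_ofReal_le_of_le_mul_add hX hmean ht
          (continuous_exp.comp_aestronglyMeasurable (hX.1.const_mul t)) (fun ω => (exp_pos _).le)
          ((integrable_const 1).add (hg.const_mul _)) (fun ω => by positivity) hpt
    _ ≤ ENNReal.ofReal (1 + t ^ 2 / R * K) :=
        lintegral_ofReal_le_ofReal_add_mul hl zero_le_one hK (fun ω => le_rfl) hXK

theorem lintegral_exp_mul_le_exp_mul_sq (hK : 0 ≤ K) (hR : 0 < R) (ht : 0 ≤ t) (hX : Integrable X μ)
    (hmean : ∫ ω, X ω ∂μ ≤ 0)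
    (hXK : ∫⁻ ω, ENNReal.ofReal (exp (R * X ω ^ 2)) ∂μ ≤ ENNReal.ofReal K) :
    ∫⁻ ω, ENNReal.ofReal (exp (t * X ω)) ∂μ ≤
      ENNReal.ofReal (exp ((4 * K + 1) / (2 * R) * t ^ 2 / 2)) := by
  have hexponent : (4 * K + 1) / (2 * R) * t ^ 2 / 2 = t ^ 2 / R * K + t ^ 2 / (4 * R) := by
    field_simp; ring
  rw [hexponent]
  rcases le_or_gt (t ^ 2) R with hsmall | hlarge
  · refine (lintegral_exp_mul_le_one_add_of_sq_le hK hR ht hsmall hX hmean hXK).trans (ofReal_le_ofReal ?_)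
    calc 1 + t ^ 2 / R * K ≤ exp (t ^ 2 / R * K) := by linarith [add_one_le_exp (t ^ 2 / R * K)]
      _ ≤ exp (t ^ 2 / R * K + t ^ 2 / (4 * R)) :=
          exp_le_exp.mpr (le_add_of_nonneg_right (by positivity))
  · refine (lintegral_exp_mul_le_exp_div_mul hK hR hXK).trans (ofReal_le_ofReal ?_)
    have hKt : K ≤ t ^ 2 / R * K := le_mul_of_one_le_left hK ((one_le_div hR).mpr hlarge.le)
    calc exp (t ^ 2 / (4 * R)) * K ≤ exp (t ^ 2 / (4 * R)) * exp K := by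
          gcongr; linarith [add_one_le_exp K]
      _ ≤ exp (t ^ 2 / R * K + t ^ 2 / (4 * R)) := by
          rw [← exp_add]; exact exp_le_exp.mpr (by linarith)

end

/-- Lemma 2.8: if `E[exp (R X²)] ≤ K`, then `E[exp (t |X|)] ≤ 1 + (K √π / (2 √R)) t exp (t² / (4R))`
for all `t > 0`; if moreover `E[X] ≤ 0`, then `E[exp (t X)] ≤ exp (a t² / 2)` for all `t > 0`,
with `a > 0` depending only on `K` and `R`. -/
theorem laplace_bound_of_square_exponential_moment (K R : ℝ) (hK : 0 < K) (hR : 0 < R) :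
    (∀ {Ω : Type*} {m0 : MeasurableSpace Ω} (μ : Measure Ω), IsProbabilityMeasure μ →
      ∀ (X : Ω → ℝ), Measurable X →
        (∫⁻ ω, ENNReal.ofReal (Real.exp (R * (X ω) ^ 2)) ∂μ) ≤ ENNReal.ofReal K →
        ∀ t : ℝ, 0 < t →
          (∫⁻ ω, ENNReal.ofReal (Real.exp (t * |X ω|)) ∂μ) ≤
            ENNReal.ofReal (1 + K * Real.sqrt Real.pi / (2 * Real.sqrt R) * t *
              Real.exp (t ^ 2 / (4 * R)))) ∧
    (∃ a : ℝ, 0 < a ∧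
      ∀ {Ω : Type*} {m0 : MeasurableSpace Ω} (μ : Measure Ω), IsProbabilityMeasure μ →
      ∀ (X : Ω → ℝ), Measurable X → Integrable X μ → (∫ ω, X ω ∂μ) ≤ 0 →
        (∫⁻ ω, ENNReal.ofReal (Real.exp (R * (X ω) ^ 2)) ∂μ) ≤ ENNReal.ofReal K →
        ∀ t : ℝ, 0 < t →
          (∫⁻ ω, ENNReal.ofReal (Real.exp (t * X ω)) ∂μ) ≤
            ENNReal.ofReal (Real.exp (a * t ^ 2 / 2))) :=
  ⟨fun _ _ _ _ hXK _ ht => lintegral_exp_mul_abs_le hK.le hR ht.le hXK,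
    ⟨(4 * K + 1) / (2 * R), by positivity, fun _ _ _ _ hX hmean hXK _ ht =>
      lintegral_exp_mul_le_exp_mul_sq hK.le hR ht.le hX hmean hXK⟩⟩
end

section
/- Let (X_i)_{1≤i≤n} be any sequence of real random variables adapted to a filtration (F_i)_{1≤i≤n}, and suppose there exist constants Q > 1, R > 0 and K > 0 such that for all i ∈ {1,…,n}, almost surely E[exp(R|X_i|^Q) | F_{i-1}] ≤ K. Let ρ > 1 and τ > 0 satisfy 1/Q + 1/ρ = 1 and (ρτ)^{1/ρ}(QR)^{1/Q} = 1. Then for any τ_1 > τ, there exists t_1 > 0, depending only on K, Q, R and τ_1, such that E[exp(t|S_n|)] ≤ exp(n τ_1 t^ρ) for all t ≥ t_1, and P[|S_n|/n > x] ≤ exp(−n R_1 x^Q) for all x ≥ x_1 := ρ τ_1 t_1^{ρ−1}, where R_1 > 0 is the constant satisfying (ρτ_1)^{1/ρ}(Q R_1)^{1/Q} = 1. -/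
open MeasureTheory ProbabilityTheory Filter
open scoped ENNReal

/-! With `ρ, Q` conjugate and `(ρτ)^(1/ρ) (QR)^(1/Q) = 1`, Young's inequality reads
`t |x| ≤ τ t^ρ + R |x|^Q`. Hence `exp (t |X_i|) ≤ exp (τ t^ρ) exp (R |X_i|^Q)` has conditional
expectation at most `K exp (τ t^ρ)` given `F_{i-1}`, and peeling off the factors of
`exp (t |S_n|) ≤ ∏ exp (t |X_i|)` from the last one bounds the Laplace transform by
`(K exp (τ t^ρ))^n`, which is at most `exp (n τ₁ t^ρ)` once `t^ρ` is large. The tail bound is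
Chernoff's inequality at the `t` with `x = ρ τ₁ t^(ρ-1)`: this is the equality case of the same
Young inequality for the constants `τ₁, R₁`. -/

namespace Real.HolderConjugate

variable {ρ Q σ r : ℝ} (hρQ : ρ.HolderConjugate Q) (hσ : 0 < σ) (hr : 0 < r)
  (hσr : (ρ * σ) ^ (1 / ρ) * (Q * r) ^ (1 / Q) = 1)
include hρQ hσ hr hσr

lemma rpow_div_mul_eq_one : (ρ * σ) ^ (Q / ρ) * (Q * r) = 1 := by
  have hρσ : 0 ≤ ρ * σ := (mul_pos hρQ.pos hσ).le
  have hQr : 0 ≤ Q * r := (mul_pos hρQ.symm.pos hr).le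
  have := congrArg (· ^ Q) hσr
  simp only [Real.one_rpow] at this
  rwa [Real.mul_rpow (Real.rpow_nonneg hρσ _) (Real.rpow_nonneg hQr _), ← Real.rpow_mul hρσ,
    ← Real.rpow_mul hQr, one_div_mul_eq_div, one_div_mul_cancel hρQ.symm.ne_zero,
    Real.rpow_one] at this

lemma mul_rpow_eq_sub_one_mul : r * (ρ * σ) ^ Q = (ρ - 1) * σ := by
  have hρσ : 0 < ρ * σ := mul_pos hρQ.pos hσ
  have hsplit : (ρ * σ) ^ Q = (ρ * σ) ^ (Q / ρ) * (ρ * σ) := by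
    rw [← Real.rpow_add_one hρσ.ne']
    congr 1
    field_simp [hρQ.ne_zero]
    linarith [hρQ.mul_eq_add]
  have := hρQ.rpow_div_mul_eq_one hσ hr hσr
  rw [hsplit, ← hρQ.div_conj_eq_sub_one, div_mul_eq_mul_div, eq_div_iff hρQ.symm.ne_zero]
  linear_combination (ρ * σ) * this

theorem mul_le_mul_rpow_add_mul_rpow {t x : ℝ} (ht : 0 ≤ t) (hx : 0 ≤ x) :
    t * x ≤ σ * t ^ ρ + r * x ^ Q := by
  set s := (ρ * σ) ^ (1 / ρ) with hs_def
  have hρσ : 0 < ρ * σ := mul_pos hρQ.pos hσ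
  have hs : 0 < s := Real.rpow_pos_of_pos hρσ _
  have hsρ : s ^ ρ = ρ * σ := by
    rw [hs_def, one_div]
    exact Real.rpow_inv_rpow hρσ.le hρQ.ne_zero
  have hsQ : Q * r * s ^ Q = 1 := by
    rw [← Real.rpow_mul hρσ.le, one_div_mul_eq_div, mul_comm]
    exact hρQ.rpow_div_mul_eq_one hσ hr hσr
  calc t * x = (s * t) * (x / s) := by field_simp
    _ ≤ (s * t) ^ ρ / ρ + (x / s) ^ Q / Q :=
      Real.young_inequality_of_nonneg (by positivity) (by positivity) hρQ
    _ = σ * t ^ ρ + r * x ^ Q := by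
      rw [Real.mul_rpow hs.le ht, Real.div_rpow hx hs.le, hsρ]
      congr 1
      · field_simp [hρQ.ne_zero]
      · rw [div_div, div_eq_iff (mul_ne_zero (by positivity) hρQ.symm.ne_zero)]
        linear_combination (-x ^ Q) * hsQ

theorem mul_eq_mul_rpow_add_mul_rpow {t x : ℝ} (ht : 0 < t) (hx : x = ρ * σ * t ^ (ρ - 1)) :
    t * x = σ * t ^ ρ + r * x ^ Q := by
  have hρσ : 0 < ρ * σ := mul_pos hρQ.pos hσ
  have htx : t * x = ρ * σ * t ^ ρ := by
    rw [hx, Real.rpow_sub_one ht.ne']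
    field_simp
  have hxQ : x ^ Q = (ρ * σ) ^ Q * t ^ ρ := by
    rw [hx, Real.mul_rpow hρσ.le (Real.rpow_nonneg ht.le _), ← Real.rpow_mul ht.le,
      hρQ.sub_one_mul_conj]
  rw [htx, hxQ, ← mul_assoc, hρQ.mul_rpow_eq_sub_one_mul hσ hr hσr]
  ring

end Real.HolderConjugate

lemma eventually_exp_mul_rpow_mul_le_exp_mul_rpow {ρ τ τ₁ : ℝ} (hρ : 0 < ρ) (hτ₁ : τ < τ₁)
    (K : ℝ) : ∀ᶠ t in atTop, Real.exp (τ * t ^ ρ) * K ≤ Real.exp (τ₁ * t ^ ρ) := by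
  filter_upwards [(tendsto_rpow_atTop hρ).eventually_ge_atTop (Real.log K / (τ₁ - τ))]
    with t ht
  rw [div_le_iff₀ (sub_pos.mpr hτ₁)] at ht
  calc Real.exp (τ * t ^ ρ) * K ≤ Real.exp (τ * t ^ ρ) * Real.exp (Real.log K) := by
        gcongr; exact Real.le_exp_log K
    _ ≤ Real.exp (τ₁ * t ^ ρ) := by
        rw [← Real.exp_add]; gcongr; linarith

lemma exists_ge_eq_mul_rpow_sub_one {ρ c t₁ x : ℝ} (hρ : 1 < ρ) (hc : 0 < c) (ht₁ : 0 ≤ t₁)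
    (hx : c * t₁ ^ (ρ - 1) ≤ x) : ∃ t, t₁ ≤ t ∧ x = c * t ^ (ρ - 1) := by
  have hρ1 : 0 < ρ - 1 := sub_pos.mpr hρ
  have hxc : 0 ≤ x / c := div_nonneg ((by positivity : 0 ≤ c * t₁ ^ (ρ - 1)).trans hx) hc.le
  refine ⟨(x / c) ^ (ρ - 1)⁻¹, ?_, ?_⟩
  · rw [← Real.rpow_le_rpow_iff ht₁ (by positivity) hρ1, Real.rpow_inv_rpow hxc hρ1.ne',
      le_div_iff₀' hc]
    exact hx
  · rw [Real.rpow_inv_rpow hxc hρ1.ne']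
    field_simp

theorem measure_ge_le_exp_mul_lintegral_exp {Ω : Type*} {m0 : MeasurableSpace Ω}
    {μ : Measure Ω} {f : Ω → ℝ} (hf : AEMeasurable f μ) {t : ℝ} (ht : 0 ≤ t) (a : ℝ) :
    μ {ω | a ≤ f ω} ≤
      ENNReal.ofReal (Real.exp (-(t * a))) * ∫⁻ ω, ENNReal.ofReal (Real.exp (t * f ω)) ∂μ := by
  have hexp : ENNReal.ofReal (Real.exp (-(t * a))) * ENNReal.ofReal (Real.exp (t * a)) = 1 := by
    rw [← ENNReal.ofReal_mul (Real.exp_pos _).le, ← Real.exp_add, neg_add_cancel, Real.exp_zero,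
      ENNReal.ofReal_one]
  calc μ {ω | a ≤ f ω}
      ≤ ENNReal.ofReal (Real.exp (-(t * a))) *
          (ENNReal.ofReal (Real.exp (t * a)) *
            μ {ω | ENNReal.ofReal (Real.exp (t * a)) ≤ ENNReal.ofReal (Real.exp (t * f ω))}) := by
        rw [← mul_assoc, hexp, one_mul]
        refine measure_mono fun ω hω => ?_
        exact ENNReal.ofReal_le_ofReal (Real.exp_le_exp.mpr (mul_le_mul_of_nonneg_left hω ht))
    _ ≤ _ := by
        gcongr
        exact mul_meas_ge_le_lintegral₀ (by fun_prop) _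

theorem measure_abs_div_gt_le_exp_of_lintegral_exp_le {Ω : Type*} {m0 : MeasurableSpace Ω}
    {μ : Measure Ω} {S : Ω → ℝ} (hS : AEMeasurable S μ) {n : ℕ} (hn : 0 < n)
    {ρ Q σ r t x : ℝ} (hρQ : ρ.HolderConjugate Q) (hσ : 0 < σ) (hr : 0 < r)
    (hσr : (ρ * σ) ^ (1 / ρ) * (Q * r) ^ (1 / Q) = 1) (ht : 0 < t)
    (hx : x = ρ * σ * t ^ (ρ - 1))
    (hlaplace : ∫⁻ ω, ENNReal.ofReal (Real.exp (t * |S ω|)) ∂μ ≤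
      ENNReal.ofReal (Real.exp (n * σ * t ^ ρ))) :
    μ {ω | |S ω| / n > x} ≤ ENNReal.ofReal (Real.exp (-(n * r * x ^ Q))) := by
  calc μ {ω | |S ω| / n > x} ≤ μ {ω | n * x ≤ |S ω|} := by
        refine measure_mono fun ω (hω : x < |S ω| / n) => ?_
        exact ((lt_div_iff₀' (Nat.cast_pos.mpr hn)).mp hω).le
    _ ≤ ENNReal.ofReal (Real.exp (-(t * (n * x)))) *
          ∫⁻ ω, ENNReal.ofReal (Real.exp (t * |S ω|)) ∂μ :=
        measure_ge_le_exp_mul_lintegral_exp hS.abs ht.le _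
    _ ≤ ENNReal.ofReal (Real.exp (-(t * (n * x)))) *
          ENNReal.ofReal (Real.exp (n * σ * t ^ ρ)) := by
        gcongr
    _ = ENNReal.ofReal (Real.exp (-(n * r * x ^ Q))) := by
        rw [← ENNReal.ofReal_mul (Real.exp_pos _).le, ← Real.exp_add]
        congr 2
        linear_combination (-n : ℝ) * hρQ.mul_eq_mul_rpow_add_mul_rpow hσ hr hσr ht hx

lemma exp_mul_abs_sum_le_prod {ι : Type*} (s : Finset ι) (x : ι → ℝ) {t : ℝ} (ht : 0 ≤ t) :
    Real.exp (t * |∑ i ∈ s, x i|) ≤ ∏ i ∈ s, Real.exp (t * |x i|) := by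
  rw [← Real.exp_sum, ← Finset.mul_sum]
  gcongr
  exact Finset.abs_sum_le_sum_abs x s

section CondLExp

variable {Ω : Type*} {m m0 : MeasurableSpace Ω} {P : Measure Ω}

/-- Stated for lower Lebesgue integrals, so that no integrability of the product is needed. -/
theorem lintegral_mul_condLExp (hm : m ≤ m0) [SigmaFinite (P.trim hm)] {W X : Ω → ℝ≥0∞}
    (hW : Measurable[m] W) (hX : Measurable X) :
    ∫⁻ ω, P⁻[X|m] ω * W ω ∂P = ∫⁻ ω, X ω * W ω ∂P := by
  have htrim : (P.withDensity P⁻[X|m]).trim hm = (P.withDensity X).trim hm := by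
    refine @Measure.ext _ m _ _ fun s hs => ?_
    rw [trim_measurableSet_eq hm hs, trim_measurableSet_eq hm hs, withDensity_apply _ (hm s hs),
      withDensity_apply _ (hm s hs), setLIntegral_condLExp hm P X hs]
  calc ∫⁻ ω, P⁻[X|m] ω * W ω ∂P = ∫⁻ ω, W ω ∂(P.withDensity P⁻[X|m]).trim hm := by
        rw [lintegral_trim hm hW, lintegral_withDensity_eq_lintegral_mul _
          (measurable_condLExp' m P X) (hW.mono hm le_rfl)]
        rfl
    _ = ∫⁻ ω, X ω * W ω ∂P := by
        rw [htrim, lintegral_trim hm hW,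
          lintegral_withDensity_eq_lintegral_mul _ hX (hW.mono hm le_rfl)]
        rfl

theorem lintegral_mul_le_of_ae_condLExp_le (hm : m ≤ m0) [SigmaFinite (P.trim hm)]
    {W X : Ω → ℝ≥0∞} (hW : Measurable[m] W) (hX : Measurable X) {c : ℝ≥0∞}
    (hc : ∀ᵐ ω ∂P, P⁻[X|m] ω ≤ c) :
    ∫⁻ ω, X ω * W ω ∂P ≤ c * ∫⁻ ω, W ω ∂P := by
  rw [← lintegral_mul_condLExp hm hW hX, ← lintegral_const_mul c (hW.mono hm le_rfl)]
  refine lintegral_mono_ae ?_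
  filter_upwards [hc] with ω hω
  gcongr

theorem ae_condLExp_ofReal_le_of_le_mul {f g : Ω → ℝ} {a K : ℝ} (ha : 0 ≤ a)
    (hfg : ∀ ω, f ω ≤ a * g ω) (hg : Integrable g P) (hg0 : 0 ≤ᵐ[P] g)
    (hK : ∀ᵐ ω ∂P, P[g|m] ω ≤ K) :
    ∀ᵐ ω ∂P, P⁻[fun ω => ENNReal.ofReal (f ω)|m] ω ≤ ENNReal.ofReal (a * K) := by
  have hmono : P⁻[fun ω => ENNReal.ofReal (f ω)|m] ≤ᵐ[P]
      P⁻[ENNReal.ofReal a • fun ω => ENNReal.ofReal (g ω)|m] :=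
    condLExp_mono <| ae_of_all _ fun ω => by
      simpa only [Pi.smul_apply, smul_eq_mul, ← ENNReal.ofReal_mul ha]
        using ENNReal.ofReal_le_ofReal (hfg ω)
  filter_upwards [hmono, condLExp_smul' (fun ω => ENNReal.ofReal (g ω)) ENNReal.ofReal_ne_top,
    condLExp_ofReal m hg hg0, hK] with ω hω hsmul hgω hKω
  rw [hsmul, Pi.smul_apply, hgω, smul_eq_mul, ← ENNReal.ofReal_mul ha] at hω
  exact hω.trans (ENNReal.ofReal_le_ofReal (by gcongr))

theorem lintegral_prod_Icc_le_pow [IsProbabilityMeasure P] (ℱ : Filtration ℕ m0)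
    {Y : ℕ → Ω → ℝ≥0∞} {c : ℝ≥0∞} (n : ℕ) (hY : ∀ i ∈ Finset.Icc 1 n, Measurable[ℱ i] (Y i))
    (hc : ∀ i ∈ Finset.Icc 1 n, ∀ᵐ ω ∂P, P⁻[Y i|ℱ (i - 1)] ω ≤ c) :
    ∫⁻ ω, ∏ i ∈ Finset.Icc 1 n, Y i ω ∂P ≤ c ^ n := by
  induction n with
  | zero => simp
  | succ n ih =>
    have hsub : Finset.Icc 1 n ⊆ Finset.Icc 1 (n + 1) := Finset.Icc_subset_Icc_right n.le_succ
    have hlast : n + 1 ∈ Finset.Icc 1 (n + 1) := by simp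
    have hW : Measurable[ℱ n] fun ω => ∏ i ∈ Finset.Icc 1 n, Y i ω :=
      Finset.measurable_prod _ fun i hi =>
        (hY i (hsub hi)).mono (ℱ.mono (Finset.mem_Icc.mp hi).2) le_rfl
    simp_rw [Finset.prod_Icc_succ_top (Nat.le_add_left 1 n), mul_comm _ (Y (n + 1) _)]
    calc ∫⁻ ω, Y (n + 1) ω * ∏ i ∈ Finset.Icc 1 n, Y i ω ∂P
        ≤ c * ∫⁻ ω, ∏ i ∈ Finset.Icc 1 n, Y i ω ∂P :=
          lintegral_mul_le_of_ae_condLExp_le (ℱ.le n) hW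
            ((hY _ hlast).mono (ℱ.le _) le_rfl) (hc _ hlast)
      _ ≤ c * c ^ n := by
          gcongr
          exact ih (fun i hi => hY i (hsub hi)) (fun i hi => hc i (hsub hi))
      _ = c ^ (n + 1) := (pow_succ' c n).symm

end CondLExp

theorem lintegral_exp_mul_abs_sum_le {Ω : Type*} {m0 : MeasurableSpace Ω} {μ : Measure Ω}
    [IsProbabilityMeasure μ] (ℱ : Filtration ℕ m0) {n : ℕ} {X : ℕ → Ω → ℝ} {R Q K : ℝ}
    (hX : ∀ i ∈ Finset.Icc 1 n, StronglyMeasurable[ℱ i] (X i))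
    (hint : ∀ i ∈ Finset.Icc 1 n, Integrable (fun ω => Real.exp (R * |X i ω| ^ Q)) μ)
    (hcond : ∀ i ∈ Finset.Icc 1 n,
      ∀ᵐ ω ∂μ, (μ[fun ω' => Real.exp (R * |X i ω'| ^ Q)|ℱ (i - 1)]) ω ≤ K)
    {t b : ℝ} (ht : 0 ≤ t) (hb : ∀ x : ℝ, t * |x| ≤ b + R * |x| ^ Q) :
    ∫⁻ ω, ENNReal.ofReal (Real.exp (t * |∑ i ∈ Finset.Icc 1 n, X i ω|)) ∂μ ≤
      ENNReal.ofReal (Real.exp b * K) ^ n := by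
  calc ∫⁻ ω, ENNReal.ofReal (Real.exp (t * |∑ i ∈ Finset.Icc 1 n, X i ω|)) ∂μ
      ≤ ∫⁻ ω, ∏ i ∈ Finset.Icc 1 n, ENNReal.ofReal (Real.exp (t * |X i ω|)) ∂μ := by
        refine lintegral_mono fun ω => ?_
        rw [← ENNReal.ofReal_prod_of_nonneg fun i _ => (Real.exp_pos _).le]
        exact ENNReal.ofReal_le_ofReal (exp_mul_abs_sum_le_prod _ _ ht)
    _ ≤ ENNReal.ofReal (Real.exp b * K) ^ n := by
        refine lintegral_prod_Icc_le_pow ℱ n (fun i hi => ?_) (fun i hi => ?_)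
        · have := (hX i hi).measurable
          fun_prop
        · refine ae_condLExp_ofReal_le_of_le_mul (Real.exp_pos b).le (fun ω => ?_) (hint i hi)
            (ae_of_all _ fun ω => (Real.exp_pos _).le) (hcond i hi)
          rw [← Real.exp_add]
          exact Real.exp_le_exp.mpr (hb _)

theorem adapted_large_deviation_order_Q_general
    (Q R K ρ τ τ₁ : ℝ) (hR : 0 < R)
    (hρ : 1 < ρ) (hτ : 0 < τ)
    (hconj : 1 / Q + 1 / ρ = 1)
    (hτeq : (ρ * τ) ^ (1 / ρ) * (Q * R) ^ (1 / Q) = 1)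
    (hτ₁ : τ < τ₁) :
    ∃ t₁ : ℝ, 0 < t₁ ∧
      ∀ {Ω : Type*} {m0 : MeasurableSpace Ω} (μ : Measure Ω), IsProbabilityMeasure μ →
      ∀ (ℱ : Filtration ℕ m0) (n : ℕ) (X : ℕ → Ω → ℝ), 1 ≤ n →
        (∀ i ∈ Finset.Icc 1 n, StronglyMeasurable[ℱ i] (X i)) →
        (∀ i ∈ Finset.Icc 1 n,
          Integrable (fun ω => Real.exp (R * |X i ω| ^ Q)) μ) →
        (∀ i ∈ Finset.Icc 1 n,
          ∀ᵐ ω ∂μ, (μ[fun ω' => Real.exp (R * |X i ω'| ^ Q)|ℱ (i - 1)]) ω ≤ K) →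
        (∀ t : ℝ, t₁ ≤ t →
          (∫⁻ ω, ENNReal.ofReal (Real.exp (t * |∑ i ∈ Finset.Icc 1 n, X i ω|)) ∂μ) ≤
            ENNReal.ofReal (Real.exp (n * τ₁ * t ^ ρ))) ∧
        (∀ R₁ : ℝ, 0 < R₁ → (ρ * τ₁) ^ (1 / ρ) * (Q * R₁) ^ (1 / Q) = 1 →
          ∀ x : ℝ, ρ * τ₁ * t₁ ^ (ρ - 1) ≤ x →
            μ {ω | |∑ i ∈ Finset.Icc 1 n, X i ω| / n > x} ≤
              ENNReal.ofReal (Real.exp (-(n * R₁ * x ^ Q)))) := by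
  have hρQ : ρ.HolderConjugate Q :=
    Real.holderConjugate_iff.mpr ⟨hρ, by simpa only [one_div, add_comm] using hconj⟩
  have hτ₁0 : 0 < τ₁ := hτ.trans hτ₁
  obtain ⟨t₁, ht₁⟩ := eventually_atTop.mp <|
    eventually_exp_mul_rpow_mul_le_exp_mul_rpow hρQ.pos hτ₁ K
  have ht₁0 : 0 < max t₁ 1 := lt_max_of_lt_right one_pos
  refine ⟨max t₁ 1, ht₁0, fun μ _ ℱ n X hn hX hint hcond => ?_⟩
  have laplace (t : ℝ) (ht : max t₁ 1 ≤ t) :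
      ∫⁻ ω, ENNReal.ofReal (Real.exp (t * |∑ i ∈ Finset.Icc 1 n, X i ω|)) ∂μ ≤
        ENNReal.ofReal (Real.exp (n * τ₁ * t ^ ρ)) := by
    have ht0 : 0 ≤ t := ht₁0.le.trans ht
    refine (lintegral_exp_mul_abs_sum_le ℱ hX hint hcond ht0 fun x =>
      hρQ.mul_le_mul_rpow_add_mul_rpow hτ hR hτeq ht0 (abs_nonneg x)).trans ?_
    rw [mul_assoc, Real.exp_nat_mul, ENNReal.ofReal_pow (Real.exp_pos _).le]
    gcongr
    exact ht₁ t (le_of_max_le_left ht)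
  refine ⟨laplace, fun R₁ hR₁ hR₁eq x hx => ?_⟩
  obtain ⟨t, ht, hxt⟩ := exists_ge_eq_mul_rpow_sub_one hρ (mul_pos hρQ.pos hτ₁0) ht₁0.le hx
  have hS : AEMeasurable (fun ω => ∑ i ∈ Finset.Icc 1 n, X i ω) μ :=
    (Finset.measurable_sum _ fun i hi => ((hX i hi).mono (ℱ.le i)).measurable).aemeasurable
  exact measure_abs_div_gt_le_exp_of_lintegral_exp_le hS hn hρQ hτ₁0 hR₁ hR₁eq
    (ht₁0.trans_le ht) hxt (laplace t ht)

/-- Theorem 3.1: for an adapted sequence with `E[exp (R |X_i|^Q) | F_{i-1}] ≤ K` (`Q > 1`),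
the Laplace transform of `|S_n|` grows at most like `exp (n τ₁ t^ρ)` for `t ≥ t₁`, and
`P[|S_n|/n > x] ≤ exp (-n R₁ x^Q)` for `x ≥ x₁ := ρ τ₁ t₁^(ρ-1)`, where `t₁` depends only
on `K, Q, R, τ₁` and `R₁` is determined by `(ρτ₁)^(1/ρ) (Q R₁)^(1/Q) = 1`. -/
theorem adapted_large_deviation_order_Q
    (Q R K ρ τ τ₁ : ℝ) (hQ : 1 < Q) (hR : 0 < R) (hK : 0 < K)
    (hρ : 1 < ρ) (hτ : 0 < τ)
    (hconj : 1 / Q + 1 / ρ = 1)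
    (hτeq : (ρ * τ) ^ (1 / ρ) * (Q * R) ^ (1 / Q) = 1)
    (hτ₁ : τ < τ₁) :
    ∃ t₁ : ℝ, 0 < t₁ ∧
      ∀ {Ω : Type*} {m0 : MeasurableSpace Ω} (μ : Measure Ω), IsProbabilityMeasure μ →
      ∀ (ℱ : Filtration ℕ m0) (n : ℕ) (X : ℕ → Ω → ℝ), 1 ≤ n →
        (∀ i ∈ Finset.Icc 1 n, StronglyMeasurable[ℱ i] (X i)) →
        (∀ i ∈ Finset.Icc 1 n,
          Integrable (fun ω => Real.exp (R * |X i ω| ^ Q)) μ) →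
        (∀ i ∈ Finset.Icc 1 n,
          ∀ᵐ ω ∂μ, (μ[fun ω' => Real.exp (R * |X i ω'| ^ Q)|ℱ (i - 1)]) ω ≤ K) →
        (∀ t : ℝ, t₁ ≤ t →
          (∫⁻ ω, ENNReal.ofReal (Real.exp (t * |∑ i ∈ Finset.Icc 1 n, X i ω|)) ∂μ) ≤
            ENNReal.ofReal (Real.exp (n * τ₁ * t ^ ρ))) ∧
        (∀ R₁ : ℝ, 0 < R₁ → (ρ * τ₁) ^ (1 / ρ) * (Q * R₁) ^ (1 / Q) = 1 →
          ∀ x : ℝ, ρ * τ₁ * t₁ ^ (ρ - 1) ≤ x →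
            μ {ω | |∑ i ∈ Finset.Icc 1 n, X i ω| / n > x} ≤
              ENNReal.ofReal (Real.exp (-(n * R₁ * x ^ Q)))) :=
  adapted_large_deviation_order_Q_general Q R K ρ τ τ₁ hR hρ hτ hconj hτeq hτ₁
end

section
/- Let (X_i)_{1≤i≤n} be independent and identically distributed real random variables with S_n = X_1 + ⋯ + X_n. If P[|S_n|/n > x] ≤ exp(−n R_1 x^Q) holds for some n ≥ 1, R_1 > 0, Q > 1 and all x ≥ x_1 > 0, then for all R ∈ (0, R_1), E[exp(R|X_1|^Q)] ≤ 2K, where K = exp(R x_1^Q) + (R/(R_1 − R)) exp(−(R_1 − R) x_1^Q). -/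
/-!
Independence and identical distribution give `P[X₁ ∈ s]ⁿ = P[∀ i, Xᵢ ∈ s]`. If all `Xᵢ > x`
(or all `Xᵢ < -x`) then `|Sₙ|/n > x`, so the deviation bound yields the one-variable tail
`P[|X₁| > x] ≤ 2 exp (-R₁ x^Q)` for `x ≥ x₁`. In the layer-cake formula for
`E[exp (R |X₁|^Q)]`, the substitution `t = exp (R y^Q)` turns this tail into
`P[exp (R |X₁|^Q) > t] ≤ 2 t^(-R₁/R)` for `t > exp (R x₁^Q)`, which is integrable at infinity
because `R₁/R > 1`.
-/

open MeasureTheory ProbabilityTheory Filter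
open scoped ENNReal

section IdentDistrib

variable {Ω ι : Type*} {m0 : MeasurableSpace Ω} {μ : Measure Ω} [Fintype ι]

theorem measure_iInter_preimage_eq_pow {β : Type*} [MeasurableSpace β] {X : ι → Ω → β}
    {Y : Ω → β} (hindep : iIndepFun X μ) (hident : ∀ i, IdentDistrib (X i) Y μ μ)
    {s : Set β} (hs : MeasurableSet s) :
    μ (⋂ i, X i ⁻¹' s) = μ (Y ⁻¹' s) ^ Fintype.card ι := by
  rw [hindep.meas_iInter fun i => ⟨s, hs, rfl⟩,
    Finset.prod_congr rfl fun i _ => (hident i).measure_mem_eq hs, Finset.prod_const,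
    Finset.card_univ]

theorem measure_preimage_le_of_measure_le_pow [Nonempty ι] {β : Type*} [MeasurableSpace β]
    {X : ι → Ω → β} {Y : Ω → β} (hindep : iIndepFun X μ)
    (hident : ∀ i, IdentDistrib (X i) Y μ μ) {s : Set β} (hs : MeasurableSet s) {E : Set Ω}
    {c : ℝ≥0∞} (hE : ⋂ i, X i ⁻¹' s ⊆ E) (hc : μ E ≤ c ^ Fintype.card ι) :
    μ (Y ⁻¹' s) ≤ c := by
  refine (ENNReal.pow_le_pow_left_iff (Fintype.card_ne_zero (α := ι))).1 ?_
  rw [← measure_iInter_preimage_eq_pow hindep hident hs]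
  exact (measure_mono hE).trans hc

theorem lt_abs_sum_div_card_of_forall_lt [Nonempty ι] {a : ι → ℝ} {x : ℝ}
    (h : ∀ i, x < a i) : x < |∑ i, a i| / Fintype.card ι := by
  rw [lt_div_iff₀ (by exact_mod_cast Fintype.card_pos)]
  calc x * Fintype.card ι = ∑ _i : ι, x := by simp [mul_comm]
    _ < ∑ i, a i := Finset.sum_lt_sum_of_nonempty Finset.univ_nonempty fun i _ => h i
    _ ≤ |∑ i, a i| := le_abs_self _

theorem measure_lt_abs_le_of_measure_sum_deviation_le [Nonempty ι] {X : ι → Ω → ℝ}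
    {Y : Ω → ℝ} (hindep : iIndepFun X μ) (hident : ∀ i, IdentDistrib (X i) Y μ μ)
    {x : ℝ} {c : ℝ≥0∞}
    (hdev : μ {ω | x < |∑ i, X i ω| / Fintype.card ι} ≤ c ^ Fintype.card ι) :
    μ {ω | x < |Y ω|} ≤ 2 * c := by
  have hupper : μ (Y ⁻¹' Set.Ioi x) ≤ c :=
    measure_preimage_le_of_measure_le_pow hindep hident measurableSet_Ioi
      (fun ω hω => lt_abs_sum_div_card_of_forall_lt fun i => Set.mem_iInter.1 hω i) hdev
  have hlower : μ (Y ⁻¹' Set.Iio (-x)) ≤ c := by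
    refine measure_preimage_le_of_measure_le_pow hindep hident measurableSet_Iio
      (fun ω hω => show x < _ from ?_) hdev
    have := lt_abs_sum_div_card_of_forall_lt fun i => lt_neg.1 (Set.mem_iInter.1 hω i)
    simpa only [Finset.sum_neg_distrib, abs_neg] using this
  calc μ {ω | x < |Y ω|} ≤ μ (Y ⁻¹' Set.Ioi x ∪ Y ⁻¹' Set.Iio (-x)) :=
        measure_mono fun ω (hω : x < |Y ω|) => (lt_abs.1 hω).imp id lt_neg.1
    _ ≤ c + c := (measure_union_le _ _).trans (add_le_add hupper hlower)
    _ = 2 * c := (two_mul c).symm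

end IdentDistrib

section LayerCake

variable {Ω : Type*} {m0 : MeasurableSpace Ω} {μ : Measure Ω}

theorem lintegral_ofReal_le_add_setLIntegral_Ioi_meas_lt [IsProbabilityMeasure μ]
    {f : Ω → ℝ} (hf_nonneg : 0 ≤ f) (hf : AEMeasurable f μ) {T : ℝ} (hT : 0 ≤ T) :
    ∫⁻ ω, ENNReal.ofReal (f ω) ∂μ ≤
      ENNReal.ofReal T + ∫⁻ t in Set.Ioi T, μ {ω | t < f ω} := by
  rw [lintegral_eq_lintegral_meas_lt μ (Eventually.of_forall hf_nonneg) hf,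
    ← Set.Ioc_union_Ioi_eq_Ioi hT, lintegral_union measurableSet_Ioi Set.Ioc_disjoint_Ioi_same]
  gcongr
  calc ∫⁻ t in Set.Ioc 0 T, μ {ω | t < f ω} ≤ ∫⁻ _ in Set.Ioc 0 T, 1 :=
        lintegral_mono fun _ => prob_le_one
    _ = ENNReal.ofReal T := by simp [Real.volume_Ioc]

theorem lintegral_Ioi_ofReal_rpow_neg {p T : ℝ} (hp : 1 < p) (hT : 0 < T) :
    ∫⁻ t in Set.Ioi T, ENNReal.ofReal (t ^ (-p)) =
      ENNReal.ofReal (T ^ (1 - p) / (p - 1)) := by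
  rw [← ofReal_integral_eq_lintegral_ofReal (integrableOn_Ioi_rpow_of_lt (by linarith) hT)
    ((ae_restrict_iff' measurableSet_Ioi).2 (Eventually.of_forall fun t ht =>
      Real.rpow_nonneg (hT.trans ht).le _)),
    integral_Ioi_rpow_of_lt (by linarith) hT]
  congr 1
  rw [neg_add_eq_sub, ← neg_div_neg_eq, neg_neg, neg_sub]

theorem measure_lt_exp_mul_rpow_le_of_tail {Y : Ω → ℝ} {R R₁ Q x₁ : ℝ} {C : ℝ≥0∞}
    (hR : 0 < R) (hQ : 0 < Q) (hx₁ : 0 ≤ x₁)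
    (htail : ∀ y, x₁ ≤ y →
      μ {ω | y < |Y ω|} ≤ C * ENNReal.ofReal (Real.exp (-(R₁ * y ^ Q))))
    {t : ℝ} (ht : Real.exp (R * x₁ ^ Q) < t) :
    μ {ω | t < Real.exp (R * |Y ω| ^ Q)} ≤ C * ENNReal.ofReal (t ^ (-(R₁ / R))) := by
  have ht0 : 0 < t := (Real.exp_pos _).trans ht
  have hlog : R * x₁ ^ Q < Real.log t := (Real.lt_log_iff_exp_lt ht0).2 ht
  have hlog_div : 0 ≤ Real.log t / R :=
    div_nonneg ((by positivity : 0 ≤ R * x₁ ^ Q).trans hlog.le) hR.le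
  set y := (Real.log t / R) ^ Q⁻¹
  have hy : 0 ≤ y := Real.rpow_nonneg hlog_div _
  have hyQ : R * y ^ Q = Real.log t := by
    rw [← Real.rpow_mul hlog_div, inv_mul_cancel₀ hQ.ne', Real.rpow_one,
      mul_div_cancel₀ _ hR.ne']
  have hmono {a b : ℝ} (ha : 0 ≤ a) (hb : 0 ≤ b) : R * a ^ Q < R * b ^ Q ↔ a < b :=
    (mul_lt_mul_iff_right₀ hR).trans (Real.rpow_lt_rpow_iff ha hb hQ)
  have hx₁y : x₁ ≤ y := ((hmono hx₁ hy).1 (hyQ ▸ hlog)).le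
  calc μ {ω | t < Real.exp (R * |Y ω| ^ Q)} ≤ μ {ω | y < |Y ω|} :=
        measure_mono fun ω (hω : t < _) =>
          (hmono hy (abs_nonneg _)).1 (hyQ ▸ (Real.log_lt_iff_lt_exp ht0).2 hω)
    _ ≤ C * ENNReal.ofReal (Real.exp (-(R₁ * y ^ Q))) := htail y hx₁y
    _ = C * ENNReal.ofReal (t ^ (-(R₁ / R))) := by
        rw [Real.rpow_def_of_pos ht0, ← hyQ]
        congr 3
        field_simp

theorem lintegral_exp_mul_rpow_le_of_tail {Y : Ω → ℝ} [IsProbabilityMeasure μ]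
    (hY : AEMeasurable Y μ) {R R₁ Q x₁ : ℝ} {C : ℝ≥0∞}
    (hR : 0 < R) (hRR₁ : R < R₁) (hQ : 0 < Q) (hx₁ : 0 ≤ x₁)
    (htail : ∀ y, x₁ ≤ y →
      μ {ω | y < |Y ω|} ≤ C * ENNReal.ofReal (Real.exp (-(R₁ * y ^ Q)))) :
    ∫⁻ ω, ENNReal.ofReal (Real.exp (R * |Y ω| ^ Q)) ∂μ ≤
      ENNReal.ofReal (Real.exp (R * x₁ ^ Q)) +
        C * ENNReal.ofReal (R / (R₁ - R) * Real.exp (-((R₁ - R) * x₁ ^ Q))) := by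
  set T := Real.exp (R * x₁ ^ Q)
  have hp : 1 < R₁ / R := (one_lt_div hR).2 hRR₁
  have hTp : T ^ (1 - R₁ / R) / (R₁ / R - 1) =
      R / (R₁ - R) * Real.exp (-((R₁ - R) * x₁ ^ Q)) := by
    rw [← Real.exp_mul]
    field_simp
    ring_nf
  calc ∫⁻ ω, ENNReal.ofReal (Real.exp (R * |Y ω| ^ Q)) ∂μ
      ≤ ENNReal.ofReal T + ∫⁻ t in Set.Ioi T, μ {ω | t < Real.exp (R * |Y ω| ^ Q)} :=
        lintegral_ofReal_le_add_setLIntegral_Ioi_meas_lt (fun _ => (Real.exp_pos _).le)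
          (by fun_prop) (Real.exp_pos _).le
    _ ≤ ENNReal.ofReal T + ∫⁻ t in Set.Ioi T, C * ENNReal.ofReal (t ^ (-(R₁ / R))) := by
        refine add_le_add le_rfl (setLIntegral_mono (by fun_prop) fun t ht =>
          measure_lt_exp_mul_rpow_le_of_tail hR hQ hx₁ htail ht)
    _ = _ := by
        rw [lintegral_const_mul _ (by fun_prop),
          lintegral_Ioi_ofReal_rpow_neg hp (Real.exp_pos _), hTp]

end LayerCake

theorem iid_exponential_moment_order_Q_of_deviation_bound_general
    {Ω : Type*} {m0 : MeasurableSpace Ω} (μ : Measure Ω) [IsProbabilityMeasure μ]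
    (n : ℕ) (hn : 1 ≤ n) (X : ℕ → Ω → ℝ) (R₁ Q x₁ : ℝ)
    (hQ : 1 < Q) (hx₁ : 0 < x₁)
    (hindep : iIndepFun
      (fun i : {i : ℕ // i ∈ Finset.Icc 1 n} => X i) μ)
    (hident : ∀ i ∈ Finset.Icc 1 n, IdentDistrib (X i) (X 1) μ μ)
    (hdev : ∀ x : ℝ, x₁ ≤ x →
      μ {ω | |∑ k ∈ Finset.Icc 1 n, X k ω| / n > x} ≤
        ENNReal.ofReal (Real.exp (-(n * R₁ * x ^ Q)))) :
    ∀ R : ℝ, 0 < R → R < R₁ →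
      (∫⁻ ω, ENNReal.ofReal (Real.exp (R * |X 1 ω| ^ Q)) ∂μ) ≤
        ENNReal.ofReal (2 * (Real.exp (R * x₁ ^ Q) +
          R / (R₁ - R) * Real.exp (-((R₁ - R) * x₁ ^ Q)))) := by
  intro R hR hRR₁
  have h1 : 1 ∈ Finset.Icc 1 n := Finset.mem_Icc.2 ⟨le_rfl, hn⟩
  have : Nonempty (Finset.Icc 1 n) := ⟨⟨1, h1⟩⟩
  have hcard : Fintype.card (Finset.Icc 1 n) = n := by simp
  have htail (y : ℝ) (hy : x₁ ≤ y) :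
      μ {ω | y < |X 1 ω|} ≤ 2 * ENNReal.ofReal (Real.exp (-(R₁ * y ^ Q))) := by
    refine measure_lt_abs_le_of_measure_sum_deviation_le hindep (fun i => hident i i.2) ?_
    rw [hcard, ← ENNReal.ofReal_pow (Real.exp_nonneg _), ← Real.exp_nat_mul, mul_neg,
      ← mul_assoc]
    convert hdev y hy using 6
    exact congrArg abs (Finset.sum_coe_sort _ fun k => X k _)
  have hK_nonneg : 0 ≤ R / (R₁ - R) * Real.exp (-((R₁ - R) * x₁ ^ Q)) :=
    mul_nonneg (div_nonneg hR.le (sub_pos.2 hRR₁).le) (Real.exp_nonneg _)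
  calc _ ≤ _ := lintegral_exp_mul_rpow_le_of_tail (hident 1 h1).aemeasurable_fst hR hRR₁
        (by linarith) hx₁.le htail
    _ ≤ 2 * ENNReal.ofReal (Real.exp (R * x₁ ^ Q)) +
          2 * ENNReal.ofReal (R / (R₁ - R) * Real.exp (-((R₁ - R) * x₁ ^ Q))) := by
        gcongr
        exact le_mul_of_one_le_left' one_le_two
    _ = _ := by
        rw [← mul_add, ← ENNReal.ofReal_add (Real.exp_nonneg _) hK_nonneg,
          ENNReal.ofReal_mul zero_le_two, ENNReal.ofReal_ofNat]

/-- Converse part of Theorem 3.1: if i.i.d. partial sums satisfy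
`P[|S_n|/n > x] ≤ exp (-n R₁ x^Q)` for all `x ≥ x₁`, then `X 1` has an explicit
exponential moment of order `Q` for every `R < R₁`. -/
theorem iid_exponential_moment_order_Q_of_deviation_bound
    {Ω : Type*} {m0 : MeasurableSpace Ω} (μ : Measure Ω) [IsProbabilityMeasure μ]
    (n : ℕ) (hn : 1 ≤ n) (X : ℕ → Ω → ℝ) (R₁ Q x₁ : ℝ)
    (hR₁ : 0 < R₁) (hQ : 1 < Q) (hx₁ : 0 < x₁)
    (hmeas : ∀ i, Measurable (X i))
    (hindep : iIndepFun
      (fun i : {i : ℕ // i ∈ Finset.Icc 1 n} => X i) μ)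
    (hident : ∀ i ∈ Finset.Icc 1 n, IdentDistrib (X i) (X 1) μ μ)
    (hdev : ∀ x : ℝ, x₁ ≤ x →
      μ {ω | |∑ k ∈ Finset.Icc 1 n, X k ω| / n > x} ≤
        ENNReal.ofReal (Real.exp (-(n * R₁ * x ^ Q)))) :
    ∀ R : ℝ, 0 < R → R < R₁ →
      (∫⁻ ω, ENNReal.ofReal (Real.exp (R * |X 1 ω| ^ Q)) ∂μ) ≤
        ENNReal.ofReal (2 * (Real.exp (R * x₁ ^ Q) +
          R / (R₁ - R) * Real.exp (-((R₁ - R) * x₁ ^ Q)))) :=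
  iid_exponential_moment_order_Q_of_deviation_bound_general (m0 := m0) μ n hn X R₁ Q x₁ hQ hx₁
    hindep hident hdev
end

section
/- Let X be a positive real random variable, and let Q, ρ, τ, R ∈ (0, ∞) with 1 < Q < ∞, 1/Q + 1/ρ = 1 and (ρτ)^{1/ρ}(QR)^{1/Q} = 1, and let K > 0. Then: (i) if E[exp(tX)] ≤ K exp(τ t^ρ) for all t > 0, then P[X > x] ≤ K exp(−R x^Q) for all x > 0; and (ii) if P[X > x] ≤ K exp(−R x^Q) for all x > 0, then with a = K (2/R)^{1/(Q−1)}, one has E[exp(tX)] ≤ 1 + K + a t^ρ exp(τ t^ρ) for all t > 0. -/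
/-!
(i) is the Chernoff bound `P[X > x] ≤ e^{-tx} E[e^{tX}]`, taken at the point `t` where
`t x - τ t^ρ` is maximal; the condition `(ρτ)^{1/ρ} (QR)^{1/Q} = 1` says exactly that this
maximum, the Legendre transform of `τ t^ρ`, equals `R x^Q`.

(ii) By the layer-cake formula, `E[e^{tX}] = 1 + ∫₀^∞ t e^{ts} P[X > s] ds`, whose integrand is
at most `K t e^{ts - R s^Q}`. Split at `x₀ = (2t/R)^{1/(Q-1)}`: below `x₀` the weighted Young
inequality `ts ≤ τ t^ρ + R s^Q` bounds it by `K t e^{τ t^ρ}`, and `t x₀ = (2/R)^{1/(Q-1)} t^ρ`;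
above `x₀` we have `R s^Q ≥ 2ts`, so it is at most `K t e^{-ts}`, whose integral is `K`.
-/

open MeasureTheory ProbabilityTheory Filter Real Set

section

variable {Q ρ τ R : ℝ}

lemma mul_mul_rpow_sub_one_eq_one (hQρ : Q.HolderConjugate ρ) (hτ : 0 < τ) (hR : 0 < R)
    (heq : (ρ * τ) ^ (1 / ρ) * (Q * R) ^ (1 / Q) = 1) : Q * R * (ρ * τ) ^ (Q - 1) = 1 := by
  have hρτ : 0 < ρ * τ := mul_pos hQρ.symm.pos hτ
  have hQR : 0 < Q * R := mul_pos hQρ.pos hR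
  have h : ((ρ * τ) ^ (1 / ρ) * (Q * R) ^ (1 / Q)) ^ Q = 1 := by rw [heq, one_rpow]
  rw [mul_rpow (by positivity) (by positivity), ← rpow_mul hρτ.le, ← rpow_mul hQR.le,
    one_div_mul_eq_div, one_div_mul_cancel hQρ.ne_zero, rpow_one,
    hQρ.div_conj_eq_sub_one] at h
  linarith

lemma young_inequality_of_nonneg_weighted (hQρ : Q.HolderConjugate ρ) (hτ : 0 < τ) (hR : 0 < R)
    (heq : (ρ * τ) ^ (1 / ρ) * (Q * R) ^ (1 / Q) = 1) {a b : ℝ} (ha : 0 ≤ a) (hb : 0 ≤ b) :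
    a * b ≤ τ * a ^ ρ + R * b ^ Q := by
  have hρτ : 0 < ρ * τ := mul_pos hQρ.symm.pos hτ
  have hQR : 0 < Q * R := mul_pos hQρ.pos hR
  have hα : ((ρ * τ) ^ (1 / ρ)) ^ ρ = ρ * τ := by
    rw [one_div, rpow_inv_rpow hρτ.le hQρ.symm.ne_zero]
  have hβ : ((Q * R) ^ (1 / Q)) ^ Q = Q * R := by rw [one_div, rpow_inv_rpow hQR.le hQρ.ne_zero]
  set α := (ρ * τ) ^ (1 / ρ)
  set β := (Q * R) ^ (1 / Q)
  calc a * b = (α * a) * (β * b) := by linear_combination (-(a * b)) * heq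
    _ ≤ (α * a) ^ ρ / ρ + (β * b) ^ Q / Q :=
      young_inequality_of_nonneg (by positivity) (by positivity) hQρ.symm
    _ = τ * a ^ ρ + R * b ^ Q := by
      rw [mul_rpow (by positivity) ha, mul_rpow (by positivity) hb, hα, hβ]
      field_simp [hQρ.ne_zero, hQρ.symm.ne_zero]

lemma exists_pos_mul_sub_mul_rpow_eq (hQρ : Q.HolderConjugate ρ) (hτ : 0 < τ) (hR : 0 < R)
    (heq : (ρ * τ) ^ (1 / ρ) * (Q * R) ^ (1 / Q) = 1) {x : ℝ} (hx : 0 < x) :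
    ∃ t > 0, t * x - τ * t ^ ρ = R * x ^ Q := by
  have hρτ : 0 < ρ * τ := mul_pos hQρ.symm.pos hτ
  obtain ⟨c, hc, rfl⟩ : ∃ c > 0, x = ρ * τ * c :=
    ⟨x / (ρ * τ), by positivity, (mul_div_cancel₀ x hρτ.ne').symm⟩
  -- the critical point of `t ↦ t x - τ t ^ ρ`, where `ρ τ t ^ (ρ - 1) = x`
  refine ⟨c ^ (Q - 1), by positivity, ?_⟩
  have hpow : (c ^ (Q - 1)) ^ ρ = c ^ Q := by rw [← rpow_mul hc.le, hQρ.sub_one_mul_conj]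
  have hmul : c ^ (Q - 1) * c = c ^ Q := by rw [← rpow_add_one hc.ne', sub_add_cancel]
  have hρτQ : (ρ * τ) ^ Q = (ρ * τ) ^ (Q - 1) * (ρ * τ) := by
    rw [← rpow_add_one hρτ.ne', sub_add_cancel]
  rw [hpow, mul_rpow hρτ.le hc.le, hρτQ]
  linear_combination (τ * c ^ Q * R * (ρ * τ) ^ (Q - 1)) * hQρ.mul_eq_add
    - τ * c ^ Q * (ρ - 1) * mul_mul_rpow_sub_one_eq_one hQρ hτ hR heq + ρ * τ * hmul

variable {Ω : Type*} {m0 : MeasurableSpace Ω} {μ : Measure Ω} {X : Ω → ℝ}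

lemma measure_lt_mul_exp_le_lintegral_exp (hX : AEMeasurable X μ) {t : ℝ} (ht : 0 ≤ t) (x : ℝ) :
    μ {ω | x < X ω} * ENNReal.ofReal (exp (t * x)) ≤
      ∫⁻ ω, ENNReal.ofReal (exp (t * X ω)) ∂μ := by
  rw [mul_comm]
  calc ENNReal.ofReal (exp (t * x)) * μ {ω | x < X ω}
      ≤ ENNReal.ofReal (exp (t * x)) *
          μ {ω | ENNReal.ofReal (exp (t * x)) ≤ ENNReal.ofReal (exp (t * X ω))} := by
        gcongr with ω
        intro hω
        gcongr
    _ ≤ ∫⁻ ω, ENNReal.ofReal (exp (t * X ω)) ∂μ := mul_meas_ge_le_lintegral₀ (by fun_prop) _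

lemma integral_mul_exp_mul (t y : ℝ) : ∫ s in 0..y, t * exp (t * s) = exp (t * y) - 1 := by
  have hderiv : ∀ s ∈ uIcc 0 y, HasDerivAt (fun u => exp (t * u)) (t * exp (t * s)) s := by
    intro s _
    simpa [mul_comm] using ((hasDerivAt_id s).const_mul t).exp
  rw [intervalIntegral.integral_eq_sub_of_hasDerivAt hderiv
    ((by fun_prop : Continuous _).intervalIntegrable _ _), mul_zero, exp_zero]

lemma lintegral_exp_mul_eq_measure_univ_add (hX₀ : 0 ≤ᵐ[μ] X) (hX : AEMeasurable X μ) {t : ℝ}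
    (ht : 0 ≤ t) :
    ∫⁻ ω, ENNReal.ofReal (exp (t * X ω)) ∂μ =
      μ univ + ∫⁻ s in Ioi 0, μ {ω | s < X ω} * ENNReal.ofReal (t * exp (t * s)) := by
  rw [← lintegral_comp_eq_lintegral_meas_lt_mul μ hX₀ hX
    (fun _ _ => (by fun_prop : Continuous _).intervalIntegrable _ _)
    (ae_of_all _ fun s => by positivity), ← lintegral_one, ← lintegral_add_left measurable_const]
  refine lintegral_congr_ae (hX₀.mono fun ω hω => ?_)
  have hexp : 1 ≤ exp (t * X ω) := one_le_exp (mul_nonneg ht hω)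
  dsimp only
  rw [integral_mul_exp_mul, ← ENNReal.ofReal_one,
    ← ENNReal.ofReal_add zero_le_one (sub_nonneg.2 hexp)]
  ring_nf

theorem measure_gt_le_of_lintegral_exp_le (hX : AEMeasurable X μ) (hQρ : Q.HolderConjugate ρ)
    (hτ : 0 < τ) (hR : 0 < R) (heq : (ρ * τ) ^ (1 / ρ) * (Q * R) ^ (1 / Q) = 1) {K : ℝ}
    (hmgf : ∀ t : ℝ, 0 < t →
      ∫⁻ ω, ENNReal.ofReal (exp (t * X ω)) ∂μ ≤ ENNReal.ofReal (K * exp (τ * t ^ ρ)))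
    {x : ℝ} (hx : 0 < x) :
    μ {ω | X ω > x} ≤ ENNReal.ofReal (K * exp (-(R * x ^ Q))) := by
  obtain ⟨t, ht, hopt⟩ := exists_pos_mul_sub_mul_rpow_eq hQρ hτ hR heq hx
  have hchernoff := (measure_lt_mul_exp_le_lintegral_exp hX ht.le x).trans (hmgf t ht)
  have hbound : K * exp (-(R * x ^ Q)) = K * exp (τ * t ^ ρ) / exp (t * x) := by
    rw [← hopt, mul_div_assoc, ← exp_sub]
    ring_nf
  rw [hbound, ENNReal.ofReal_div_of_pos (exp_pos _)]
  exact (ENNReal.le_div_iff_mul_le (Or.inl (by positivity)) (Or.inl ENNReal.ofReal_ne_top)).2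
    hchernoff

lemma lintegral_Ioi_mul_exp_neg_mul {t : ℝ} (ht : 0 < t) :
    ∫⁻ s in Ioi 0, ENNReal.ofReal (t * exp (-t * s)) = 1 := by
  rw [← ofReal_integral_eq_lintegral_ofReal ((exp_neg_integrableOn_Ioi 0 ht).const_mul t)
    (ae_of_all _ fun s => by positivity), integral_const_mul,
    integral_exp_mul_Ioi (neg_lt_zero.2 ht), mul_zero, exp_zero, neg_div_neg_eq, one_div,
    mul_inv_cancel₀ ht.ne', ENNReal.ofReal_one]

lemma mul_sub_mul_rpow_le_neg (hQ : 1 < Q) (hR : 0 < R) {t s : ℝ} (ht : 0 < t)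
    (hs : (2 * t / R) ^ (1 / (Q - 1)) ≤ s) : t * s - R * s ^ Q ≤ -t * s := by
  have hs₀ : 0 < s := lt_of_lt_of_le (by positivity) hs
  have hsQ : 2 * t / R ≤ s ^ (Q - 1) := by
    calc 2 * t / R = ((2 * t / R) ^ (1 / (Q - 1))) ^ (Q - 1) := by
          rw [one_div, rpow_inv_rpow (by positivity) (by linarith)]
      _ ≤ s ^ (Q - 1) := by gcongr
  have hpow : s ^ Q = s ^ (Q - 1) * s := by rw [← rpow_add_one hs₀.ne', sub_add_cancel]
  have : 2 * t ≤ R * s ^ (Q - 1) := by rwa [div_le_iff₀' hR] at hsQ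
  rw [hpow]
  nlinarith

lemma lintegral_Ioi_mul_exp_mul_sub_mul_rpow_le (hQρ : Q.HolderConjugate ρ) (hτ : 0 < τ)
    (hR : 0 < R) (heq : (ρ * τ) ^ (1 / ρ) * (Q * R) ^ (1 / Q) = 1) {t : ℝ} (ht : 0 < t) :
    ∫⁻ s in Ioi 0, ENNReal.ofReal (t * exp (t * s - R * s ^ Q)) ≤
      ENNReal.ofReal ((2 / R) ^ (1 / (Q - 1)) * t ^ ρ * exp (τ * t ^ ρ)) + 1 := by
  have htx₀ : t * (2 * t / R) ^ (1 / (Q - 1)) = (2 / R) ^ (1 / (Q - 1)) * t ^ ρ := by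
    have hρ : 1 / (Q - 1) + 1 = ρ := by
      field_simp [hQρ.sub_one_ne_zero]
      linarith [hQρ.mul_eq_add]
    rw [mul_comm, mul_div_right_comm, mul_rpow (by positivity) ht.le, mul_assoc,
      ← rpow_add_one ht.ne', hρ]
  set x₀ := (2 * t / R) ^ (1 / (Q - 1))
  have hx₀ : 0 < x₀ := by positivity
  have hbulk : ∫⁻ s in Ioc 0 x₀, ENNReal.ofReal (t * exp (t * s - R * s ^ Q)) ≤
      ENNReal.ofReal ((2 / R) ^ (1 / (Q - 1)) * t ^ ρ * exp (τ * t ^ ρ)) := by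
    calc ∫⁻ s in Ioc 0 x₀, ENNReal.ofReal (t * exp (t * s - R * s ^ Q))
        ≤ ∫⁻ s in Ioc 0 x₀, ENNReal.ofReal (t * exp (τ * t ^ ρ)) := by
          refine setLIntegral_mono' measurableSet_Ioc fun s hs => ?_
          have := young_inequality_of_nonneg_weighted hQρ hτ hR heq ht.le hs.1.le
          gcongr
          linarith
      _ = ENNReal.ofReal ((2 / R) ^ (1 / (Q - 1)) * t ^ ρ * exp (τ * t ^ ρ)) := by
          rw [setLIntegral_const, Real.volume_Ioc, sub_zero, ← ENNReal.ofReal_mul (by positivity),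
            ← htx₀]
          ring_nf
  have htail : ∫⁻ s in Ioi x₀, ENNReal.ofReal (t * exp (t * s - R * s ^ Q)) ≤ 1 := by
    calc ∫⁻ s in Ioi x₀, ENNReal.ofReal (t * exp (t * s - R * s ^ Q))
        ≤ ∫⁻ s in Ioi x₀, ENNReal.ofReal (t * exp (-t * s)) := by
          refine setLIntegral_mono' measurableSet_Ioi fun s hs => ?_
          have := mul_sub_mul_rpow_le_neg hQρ.lt hR ht (le_of_lt hs)
          gcongr
      _ ≤ ∫⁻ s in Ioi 0, ENNReal.ofReal (t * exp (-t * s)) :=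
          lintegral_mono_set (Ioi_subset_Ioi hx₀.le)
      _ = 1 := lintegral_Ioi_mul_exp_neg_mul ht
  rw [← Ioc_union_Ioi_eq_Ioi hx₀.le, lintegral_union measurableSet_Ioi (Ioc_disjoint_Ioi le_rfl)]
  exact add_le_add hbulk htail

theorem lintegral_exp_le_of_measure_gt_le [IsProbabilityMeasure μ] (hX₀ : 0 ≤ᵐ[μ] X)
    (hX : AEMeasurable X μ) (hQρ : Q.HolderConjugate ρ) (hτ : 0 < τ) (hR : 0 < R)
    (heq : (ρ * τ) ^ (1 / ρ) * (Q * R) ^ (1 / Q) = 1) {K : ℝ} (hK : 0 ≤ K)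
    (htail : ∀ x : ℝ, 0 < x → μ {ω | X ω > x} ≤ ENNReal.ofReal (K * exp (-(R * x ^ Q))))
    {t : ℝ} (ht : 0 < t) :
    ∫⁻ ω, ENNReal.ofReal (exp (t * X ω)) ∂μ ≤
      ENNReal.ofReal (1 + K + K * (2 / R) ^ (1 / (Q - 1)) * t ^ ρ * exp (τ * t ^ ρ)) := by
  have hpointwise : ∀ s ∈ Ioi (0 : ℝ), μ {ω | s < X ω} * ENNReal.ofReal (t * exp (t * s)) ≤
      ENNReal.ofReal K * ENNReal.ofReal (t * exp (t * s - R * s ^ Q)) := by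
    intro s hs
    calc μ {ω | s < X ω} * ENNReal.ofReal (t * exp (t * s))
        ≤ ENNReal.ofReal (K * exp (-(R * s ^ Q))) * ENNReal.ofReal (t * exp (t * s)) := by
          gcongr
          exact htail s hs
      _ = ENNReal.ofReal K * ENNReal.ofReal (t * exp (t * s - R * s ^ Q)) := by
          rw [← ENNReal.ofReal_mul hK, ← ENNReal.ofReal_mul (by positivity), sub_eq_add_neg,
            exp_add]
          ring_nf
  calc ∫⁻ ω, ENNReal.ofReal (exp (t * X ω)) ∂μ
      = 1 + ∫⁻ s in Ioi 0, μ {ω | s < X ω} * ENNReal.ofReal (t * exp (t * s)) := by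
        rw [lintegral_exp_mul_eq_measure_univ_add hX₀ hX ht.le, measure_univ]
    _ ≤ 1 + ENNReal.ofReal K * ∫⁻ s in Ioi 0, ENNReal.ofReal (t * exp (t * s - R * s ^ Q)) := by
        rw [← lintegral_const_mul' _ _ ENNReal.ofReal_ne_top]
        gcongr 1 + ?_
        exact setLIntegral_mono' measurableSet_Ioi hpointwise
    _ ≤ 1 + ENNReal.ofReal K *
          (ENNReal.ofReal ((2 / R) ^ (1 / (Q - 1)) * t ^ ρ * exp (τ * t ^ ρ)) + 1) := by
        gcongr
        exact lintegral_Ioi_mul_exp_mul_sub_mul_rpow_le hQρ hτ hR heq ht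
    _ = ENNReal.ofReal (1 + K + K * (2 / R) ^ (1 / (Q - 1)) * t ^ ρ * exp (τ * t ^ ρ)) := by
        rw [← ENNReal.ofReal_one, ← ENNReal.ofReal_add (by positivity) zero_le_one,
          ← ENNReal.ofReal_mul hK, ← ENNReal.ofReal_add zero_le_one (by positivity)]
        ring_nf

end

theorem laplace_tail_duality_general
    {Ω : Type*} {m0 : MeasurableSpace Ω} (μ : Measure Ω) [IsProbabilityMeasure μ]
    (X : Ω → ℝ) (hXmeas : Measurable X) (hXpos : ∀ ω, 0 ≤ X ω)
    (Q ρ τ R K : ℝ) (hQ : 1 < Q) (hτ : 0 < τ) (hR : 0 < R) (hK : 0 < K)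
    (hconj : 1 / Q + 1 / ρ = 1)
    (heq : (ρ * τ) ^ (1 / ρ) * (Q * R) ^ (1 / Q) = 1) :
    ((∀ t : ℝ, 0 < t →
        (∫⁻ ω, ENNReal.ofReal (Real.exp (t * X ω)) ∂μ) ≤
          ENNReal.ofReal (K * Real.exp (τ * t ^ ρ))) →
      ∀ x : ℝ, 0 < x →
        μ {ω | X ω > x} ≤ ENNReal.ofReal (K * Real.exp (-(R * x ^ Q)))) ∧
    ((∀ x : ℝ, 0 < x →
        μ {ω | X ω > x} ≤ ENNReal.ofReal (K * Real.exp (-(R * x ^ Q)))) →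
      ∀ t : ℝ, 0 < t →
        (∫⁻ ω, ENNReal.ofReal (Real.exp (t * X ω)) ∂μ) ≤
          ENNReal.ofReal (1 + K + K * (2 / R) ^ (1 / (Q - 1)) * t ^ ρ *
            Real.exp (τ * t ^ ρ))) := by
  have hQρ : Q.HolderConjugate ρ :=
    holderConjugate_iff.2 ⟨hQ, by simpa only [one_div] using hconj⟩
  exact ⟨fun hmgf _ hx =>
      measure_gt_le_of_lintegral_exp_le hXmeas.aemeasurable hQρ hτ hR heq hmgf hx,
    fun htail _ ht => lintegral_exp_le_of_measure_gt_le (ae_of_all _ hXpos) hXmeas.aemeasurable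
      hQρ hτ hR heq hK.le htail ht⟩

/-- Lemma 3.3: relations between the growth of the Laplace transform `E[exp (t X)]`
and the decay of the tail `P[X > x]` for a nonnegative random variable, where
`1/Q + 1/ρ = 1` and `(ρτ)^(1/ρ) (QR)^(1/Q) = 1`. -/
theorem laplace_tail_duality
    {Ω : Type*} {m0 : MeasurableSpace Ω} (μ : Measure Ω) [IsProbabilityMeasure μ]
    (X : Ω → ℝ) (hXmeas : Measurable X) (hXpos : ∀ ω, 0 ≤ X ω)
    (Q ρ τ R K : ℝ) (hQ : 1 < Q) (hρ : 0 < ρ) (hτ : 0 < τ) (hR : 0 < R) (hK : 0 < K)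
    (hconj : 1 / Q + 1 / ρ = 1)
    (heq : (ρ * τ) ^ (1 / ρ) * (Q * R) ^ (1 / Q) = 1) :
    ((∀ t : ℝ, 0 < t →
        (∫⁻ ω, ENNReal.ofReal (Real.exp (t * X ω)) ∂μ) ≤
          ENNReal.ofReal (K * Real.exp (τ * t ^ ρ))) →
      ∀ x : ℝ, 0 < x →
        μ {ω | X ω > x} ≤ ENNReal.ofReal (K * Real.exp (-(R * x ^ Q)))) ∧
    ((∀ x : ℝ, 0 < x →
        μ {ω | X ω > x} ≤ ENNReal.ofReal (K * Real.exp (-(R * x ^ Q)))) →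
      ∀ t : ℝ, 0 < t →
        (∫⁻ ω, ENNReal.ofReal (Real.exp (t * X ω)) ∂μ) ≤
          ENNReal.ofReal (1 + K + K * (2 / R) ^ (1 / (Q - 1)) * t ^ ρ *
            Real.exp (τ * t ^ ρ))) :=
  laplace_tail_duality_general (m0 := m0) μ X hXmeas hXpos Q ρ τ R K hQ hτ hR hK hconj heq
end

section
/- Let (X_i)_{1≤i≤n} be a finite sequence of supermartingale differences adapted to a filtration (F_i). If for some constants K_i > 0 and all i ∈ {1,…,n}, almost surely E[exp(|X_i|) | F_{i-1}] ≤ K_i, then for each K ≥ (K_1 + ⋯ + K_n)/n: E[exp(t S_n)] ≤ exp(nK t²/(1−t)) for all t ∈ (0,1); P[S_n/n > x] ≤ exp(−n(√(x+K) − √K)²) for all x > 0; and consequently P[S_n/n > x] ≤ exp(−n x²/(K(1+√2)²)) if 0 < x ≤ K and P[S_n/n > x] ≤ exp(−n x/(1+√2)²) if x > K. -/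
/-!
Since `E[X_i | F_{i-1}] ≤ 0` and `e^{ty} ≤ 1 + ty + t² e^{|y|}` for `0 ≤ t ≤ 1`, each increment
satisfies `E[e^{t X_i} | F_{i-1}] ≤ 1 + t² K_i ≤ e^{t² K_i}`. Conditioning successively on
`F_{n-1}, …, F_0` gives `E[e^{t S_n}] ≤ e^{t² ∑ K_i} ≤ e^{n K t² / (1 - t)}`. Markov's inequality
at `t = 1 - √K / √(x + K)` yields the tail bound `exp(-n (√(x + K) - √K)²)`, and
`√(x + K) + √K ≤ (1 + √2) √(max x K)` turns it into the two explicit regimes.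
-/

open MeasureTheory ProbabilityTheory Filter

open Nat in
lemma Real.exp_mul_le_one_add_mul_add_sq_mul_exp_abs {t y : ℝ} (ht : |t| ≤ 1) :
    Real.exp (t * y) ≤ 1 + t * y + t ^ 2 * Real.exp |y| := by
  have hasSum_exp (x : ℝ) : HasSum (fun k ↦ x ^ (k + 2) / (k + 2)!) (Real.exp x - (1 + x)) := by
    have h := (hasSum_nat_add_iff' 2).mpr (NormedSpace.expSeries_div_hasSum_exp x)
    simpa [Finset.sum_range_succ, ← Real.exp_eq_exp_ℝ] using h
  have hterm (k : ℕ) : (t * y) ^ (k + 2) / (k + 2)! ≤ t ^ 2 * (|y| ^ (k + 2) / (k + 2)!) := by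
    rw [← mul_div_assoc]
    gcongr
    calc (t * y) ^ (k + 2) ≤ |t| ^ (k + 2) * |y| ^ (k + 2) := by
          rw [← mul_pow, ← abs_mul, ← abs_pow]; exact le_abs_self _
      _ ≤ |t| ^ 2 * |y| ^ (k + 2) := by
          gcongr ?_ * _
          exact pow_le_pow_of_le_one (abs_nonneg t) ht (by omega)
      _ = t ^ 2 * |y| ^ (k + 2) := by rw [sq_abs]
  have := hasSum_le hterm (hasSum_exp (t * y)) ((hasSum_exp |y|).mul_left (t ^ 2))
  nlinarith [abs_nonneg y]

lemma sq_div_le_sqrt_add_sub_sqrt_sq {x K M : ℝ} (hx : 0 ≤ x) (hK : 0 ≤ K) (hxM : x ≤ M)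
    (hKM : K ≤ M) : x ^ 2 / ((1 + √2) ^ 2 * M) ≤ (√(x + K) - √K) ^ 2 := by
  have hsqrt_sum : √(x + K) + √K ≤ (1 + √2) * √M := by
    have h1 : √(x + K) ≤ √2 * √M := by
      rw [← Real.sqrt_mul zero_le_two]; exact Real.sqrt_le_sqrt (by linarith)
    linarith [Real.sqrt_le_sqrt hKM]
  have hsqrt_sub : 0 ≤ √(x + K) - √K := sub_nonneg.mpr (Real.sqrt_le_sqrt (by linarith))
  have hx_eq : (√(x + K) + √K) * (√(x + K) - √K) = x := by
    rw [← sq_sub_sq, Real.sq_sqrt (by linarith), Real.sq_sqrt hK]; ring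
  refine div_le_of_le_mul₀ (mul_nonneg (by positivity) (hK.trans hKM)) (sq_nonneg _) ?_
  calc x ^ 2 = ((√(x + K) + √K) * (√(x + K) - √K)) ^ 2 := by rw [hx_eq]
    _ ≤ ((1 + √2) * √M * (√(x + K) - √K)) ^ 2 := by gcongr
    _ = (√(x + K) - √K) ^ 2 * ((1 + √2) ^ 2 * M) := by
        rw [mul_pow, mul_pow, Real.sq_sqrt (hK.trans hKM)]; ring

section

variable {Ω : Type*} {m m0 : MeasurableSpace Ω} {μ : Measure Ω}

lemma integrable_exp_mul_of_integrable_exp_abs {Y : Ω → ℝ} {t : ℝ} (ht : |t| ≤ 1)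
    (hY : AEStronglyMeasurable Y μ) (hexpY : Integrable (fun ω ↦ Real.exp |Y ω|) μ) :
    Integrable (fun ω ↦ Real.exp (t * Y ω)) μ := by
  refine hexpY.mono' (by fun_prop) (Eventually.of_forall fun ω ↦ ?_)
  rw [Real.norm_of_nonneg (Real.exp_nonneg _), Real.exp_le_exp]
  calc t * Y ω ≤ |t| * |Y ω| := (le_abs_self _).trans (abs_mul _ _).le
    _ ≤ |Y ω| := mul_le_of_le_one_left (abs_nonneg _) ht

lemma ae_condExp_exp_mul_le [IsFiniteMeasure μ] (hm : m ≤ m0) {Y : Ω → ℝ} {c t : ℝ}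
    (ht0 : 0 ≤ t) (ht1 : t ≤ 1) (hY : Integrable Y μ)
    (hexpY : Integrable (fun ω ↦ Real.exp |Y ω|) μ) (hcondY : ∀ᵐ ω ∂μ, μ[Y|m] ω ≤ 0)
    (hcondExp : ∀ᵐ ω ∂μ, μ[fun ω ↦ Real.exp |Y ω| | m] ω ≤ c) :
    ∀ᵐ ω ∂μ, μ[fun ω ↦ Real.exp (t * Y ω)|m] ω ≤ 1 + t ^ 2 * c := by
  have ht : |t| ≤ 1 := abs_le.mpr ⟨by linarith, ht1⟩
  set E := fun ω ↦ Real.exp |Y ω|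
  set W := (fun _ ↦ (1 : ℝ)) + t • Y + t ^ 2 • E
  have hexp_le_W : (fun ω ↦ Real.exp (t * Y ω)) ≤ W := fun _ ↦
    Real.exp_mul_le_one_add_mul_add_sq_mul_exp_abs ht
  have hW_int : Integrable W μ := ((integrable_const 1).add (hY.smul t)).add (hexpY.smul _)
  have hcondExp_W : μ[W|m] =ᵐ[μ] (fun _ ↦ (1 : ℝ)) + t • μ[Y|m] + t ^ 2 • μ[E|m] := by
    filter_upwards [condExp_add ((integrable_const 1).add (hY.smul t)) (hexpY.smul (t ^ 2)) m,
      condExp_add (integrable_const 1) (hY.smul t) m, condExp_smul t Y m,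
      condExp_smul (t ^ 2) E m] with ω h1 h2 h3 h4
    rw [h1, Pi.add_apply, h2, Pi.add_apply, h3, h4, condExp_const hm]
    rfl
  filter_upwards [condExp_mono (integrable_exp_mul_of_integrable_exp_abs ht hY.1 hexpY) hW_int
    (Eventually.of_forall hexp_le_W), hcondExp_W, hcondY, hcondExp] with ω h1 h2 h3 h4
  rw [h2] at h1
  simp only [Pi.add_apply, Pi.smul_apply, smul_eq_mul] at h1
  nlinarith

lemma setIntegral_le_of_ae_condExp_le [IsFiniteMeasure μ] (hm : m ≤ m0) {Z : Ω → ℝ} {c : ℝ}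
    (hZ : Integrable Z μ) (hc : ∀ᵐ ω ∂μ, μ[Z|m] ω ≤ c) {s : Set Ω} (hs : MeasurableSet[m] s) :
    ∫ ω in s, Z ω ∂μ ≤ c * μ.real s := by
  rw [← setIntegral_condExp hm hZ hs, mul_comm, ← smul_eq_mul, ← setIntegral_const]
  exact setIntegral_mono_ae_restrict integrable_condExp.integrableOn integrableOn_const
    (ae_restrict_of_ae hc)

/-- The density `Z` integrates like its conditional expectation against `m`-measurable
functions, so on `m` the measure `Z • μ` is dominated by `c • μ`. -/
lemma lintegral_mul_le_of_ae_condExp_le [IsFiniteMeasure μ] (hm : m ≤ m0) {Y : Ω → ENNReal}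
    (hY : Measurable[m] Y) {Z : Ω → ℝ} (hZ : Integrable Z μ) (hZ0 : 0 ≤ᵐ[μ] Z) {c : ℝ}
    (hc : ∀ᵐ ω ∂μ, μ[Z|m] ω ≤ c) :
    ∫⁻ ω, ENNReal.ofReal (Z ω) * Y ω ∂μ ≤ ENNReal.ofReal c * ∫⁻ ω, Y ω ∂μ := by
  set ν := μ.withDensity fun ω ↦ ENNReal.ofReal (Z ω)
  have hνμ : ν.trim hm ≤ ENNReal.ofReal c • μ.trim hm := by
    refine Measure.le_iff.mpr fun s hs ↦ ?_
    rw [Measure.smul_apply, trim_measurableSet_eq hm hs, trim_measurableSet_eq hm hs,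
      withDensity_apply _ (hm s hs), smul_eq_mul,
      ← ofReal_integral_eq_lintegral_ofReal hZ.integrableOn (ae_restrict_of_ae hZ0),
      ← ofReal_measureReal, ← ENNReal.ofReal_mul' measureReal_nonneg]
    exact ENNReal.ofReal_le_ofReal (setIntegral_le_of_ae_condExp_le hm hZ hc hs)
  calc ∫⁻ ω, ENNReal.ofReal (Z ω) * Y ω ∂μ = ∫⁻ ω, Y ω ∂ν.trim hm := by
        rw [lintegral_trim hm hY, lintegral_withDensity_eq_lintegral_mul₀
          hZ.aemeasurable.ennreal_ofReal (hY.mono hm le_rfl).aemeasurable]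
        rfl
    _ ≤ ∫⁻ ω, Y ω ∂(ENNReal.ofReal c • μ.trim hm) := lintegral_mono' hνμ le_rfl
    _ = ENNReal.ofReal c * ∫⁻ ω, Y ω ∂μ := by
        rw [lintegral_smul_measure, lintegral_trim hm hY, smul_eq_mul]

lemma lintegral_exp_mul_sum_le [IsProbabilityMeasure μ] (ℱ : Filtration ℕ m0) {X : ℕ → Ω → ℝ}
    {Kseq : ℕ → ℝ} {t : ℝ} (ht0 : 0 ≤ t) (ht1 : t ≤ 1) (n : ℕ)
    (hadp : ∀ i ∈ Finset.Icc 1 n, StronglyMeasurable[ℱ i] (X i))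
    (hint : ∀ i ∈ Finset.Icc 1 n, Integrable (X i) μ)
    (hsmg : ∀ i ∈ Finset.Icc 1 n, ∀ᵐ ω ∂μ, (μ[X i|ℱ (i - 1)]) ω ≤ 0)
    (hexpint : ∀ i ∈ Finset.Icc 1 n, Integrable (fun ω ↦ Real.exp |X i ω|) μ)
    (hcond : ∀ i ∈ Finset.Icc 1 n,
      ∀ᵐ ω ∂μ, (μ[fun ω' ↦ Real.exp |X i ω'| | ℱ (i - 1)]) ω ≤ Kseq i) :
    ∫⁻ ω, ENNReal.ofReal (Real.exp (t * ∑ i ∈ Finset.Icc 1 n, X i ω)) ∂μ ≤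
      ENNReal.ofReal (Real.exp (t ^ 2 * ∑ i ∈ Finset.Icc 1 n, Kseq i)) := by
  induction n with
  | zero => simp
  | succ n ih =>
    have hsub : Finset.Icc 1 n ⊆ Finset.Icc 1 (n + 1) := Finset.Icc_subset_Icc_right n.le_succ
    have hlast : n + 1 ∈ Finset.Icc 1 (n + 1) := Finset.right_mem_Icc.mpr (by omega)
    have hS : StronglyMeasurable[ℱ n] fun ω ↦ ∑ i ∈ Finset.Icc 1 n, X i ω :=
      Finset.stronglyMeasurable_fun_sum _ fun i hi ↦
        (hadp i (hsub hi)).mono (ℱ.mono (Finset.mem_Icc.mp hi).2)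
    have hlast_int : Integrable (fun ω ↦ Real.exp (t * X (n + 1) ω)) μ :=
      integrable_exp_mul_of_integrable_exp_abs (abs_le.mpr ⟨by linarith, ht1⟩)
        (hint _ hlast).1 (hexpint _ hlast)
    have hlast_cond := ae_condExp_exp_mul_le (ℱ.le n) ht0 ht1 (hint _ hlast) (hexpint _ hlast)
      (hsmg _ hlast) (hcond _ hlast)
    calc ∫⁻ ω, ENNReal.ofReal (Real.exp (t * ∑ i ∈ Finset.Icc 1 (n + 1), X i ω)) ∂μ
        = ∫⁻ ω, ENNReal.ofReal (Real.exp (t * X (n + 1) ω)) *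
            ENNReal.ofReal (Real.exp (t * ∑ i ∈ Finset.Icc 1 n, X i ω)) ∂μ := by
          simp_rw [Finset.sum_Icc_succ_top (by omega : 1 ≤ n + 1), mul_add, Real.exp_add,
            mul_comm (Real.exp (t * ∑ i ∈ Finset.Icc 1 n, X i _)),
            ENNReal.ofReal_mul (Real.exp_nonneg _)]
      _ ≤ ENNReal.ofReal (1 + t ^ 2 * Kseq (n + 1)) *
            ∫⁻ ω, ENNReal.ofReal (Real.exp (t * ∑ i ∈ Finset.Icc 1 n, X i ω)) ∂μ :=
          lintegral_mul_le_of_ae_condExp_le (ℱ.le n)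
            (hS.measurable.const_mul t).exp.ennreal_ofReal hlast_int
            (Eventually.of_forall fun _ ↦ Real.exp_nonneg _) hlast_cond
      _ ≤ ENNReal.ofReal (Real.exp (t ^ 2 * Kseq (n + 1))) *
            ENNReal.ofReal (Real.exp (t ^ 2 * ∑ i ∈ Finset.Icc 1 n, Kseq i)) := by
          gcongr
          · linarith [Real.add_one_le_exp (t ^ 2 * Kseq (n + 1))]
          · exact ih (fun i hi ↦ hadp i (hsub hi)) (fun i hi ↦ hint i (hsub hi))
              (fun i hi ↦ hsmg i (hsub hi)) (fun i hi ↦ hexpint i (hsub hi))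
              (fun i hi ↦ hcond i (hsub hi))
      _ = ENNReal.ofReal (Real.exp (t ^ 2 * ∑ i ∈ Finset.Icc 1 (n + 1), Kseq i)) := by
          rw [← ENNReal.ofReal_mul (Real.exp_nonneg _), ← Real.exp_add,
            Finset.sum_Icc_succ_top (by omega : 1 ≤ n + 1), mul_add, add_comm]

lemma measure_lt_le_exp_of_lintegral_exp_le {S : Ω → ℝ} (hS : AEMeasurable S μ) {a B t : ℝ}
    (ht : 0 ≤ t) (h : ∫⁻ ω, ENNReal.ofReal (Real.exp (t * S ω)) ∂μ ≤ ENNReal.ofReal (Real.exp B)) :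
    μ {ω | a < S ω} ≤ ENNReal.ofReal (Real.exp (B - t * a)) := by
  calc μ {ω | a < S ω}
      ≤ μ {ω | ENNReal.ofReal (Real.exp (t * a)) ≤ ENNReal.ofReal (Real.exp (t * S ω))} :=
        measure_mono fun ω (hω : a < S ω) ↦ by
          change ENNReal.ofReal _ ≤ ENNReal.ofReal _
          gcongr
    _ ≤ (∫⁻ ω, ENNReal.ofReal (Real.exp (t * S ω)) ∂μ) / ENNReal.ofReal (Real.exp (t * a)) :=
        meas_ge_le_lintegral_div (by fun_prop) (by simp [Real.exp_pos]) ENNReal.ofReal_ne_top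
    _ ≤ ENNReal.ofReal (Real.exp B) / ENNReal.ofReal (Real.exp (t * a)) := by gcongr
    _ = ENNReal.ofReal (Real.exp (B - t * a)) := by
        rw [← ENNReal.ofReal_div_of_pos (Real.exp_pos _), ← Real.exp_sub]

lemma measure_mul_lt_le_exp_neg_sqrt_sub_sqrt_sq {S : Ω → ℝ} (hS : AEMeasurable S μ)
    {N K x : ℝ} (hK : 0 < K) (hx : 0 < x)
    (hmgf : ∀ t ∈ Set.Ioo (0 : ℝ) 1, ∫⁻ ω, ENNReal.ofReal (Real.exp (t * S ω)) ∂μ ≤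
      ENNReal.ofReal (Real.exp (N * K * t ^ 2 / (1 - t)))) :
    μ {ω | N * x < S ω} ≤ ENNReal.ofReal (Real.exp (-(N * (√(x + K) - √K) ^ 2))) := by
  have ha : 0 < √K := Real.sqrt_pos.mpr hK
  have hab : √K < √(x + K) := Real.sqrt_lt_sqrt hK.le (by linarith)
  have hb : 0 < √(x + K) := ha.trans hab
  -- the minimiser of `N K t² / (1 - t) - t N x` on `(0, 1)`
  set t := 1 - √K / √(x + K)
  have ht : t ∈ Set.Ioo (0 : ℝ) 1 := by
    constructor
    · simpa [t] using (div_lt_one hb).mpr hab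
    · simpa [t] using div_pos ha hb
  convert measure_lt_le_exp_of_lintegral_exp_le hS ht.1.le (hmgf t ht) using 4
  have key (a b : ℝ) (ha : a ≠ 0) (hb : b ≠ 0) : -(N * (b - a) ^ 2) =
      N * a ^ 2 * (1 - a / b) ^ 2 / (1 - (1 - a / b)) - (1 - a / b) * (N * (b ^ 2 - a ^ 2)) := by
    rw [sub_sub_cancel]
    field_simp
    ring
  have := key √K √(x + K) ha.ne' hb.ne'
  rwa [Real.sq_sqrt hK.le, Real.sq_sqrt (by linarith), add_sub_cancel_right] at this

end

/-- Theorem 4.1: Bernstein-type inequalities for supermartingale differences under the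
conditions `E[exp |X_i| | F_{i-1}] ≤ K_i`, with `K ≥ (K_1 + ⋯ + K_n)/n`. -/
theorem supermartingale_bernstein_inequality_Ki
    {Ω : Type*} {m0 : MeasurableSpace Ω} (μ : Measure Ω) [IsProbabilityMeasure μ]
    (ℱ : Filtration ℕ m0) (n : ℕ) (hn : 1 ≤ n) (X : ℕ → Ω → ℝ) (Kseq : ℕ → ℝ)
    (hKpos : ∀ i ∈ Finset.Icc 1 n, 0 < Kseq i)
    (hadp : ∀ i ∈ Finset.Icc 1 n, StronglyMeasurable[ℱ i] (X i))
    (hint : ∀ i ∈ Finset.Icc 1 n, Integrable (X i) μ)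
    (hsmg : ∀ i ∈ Finset.Icc 1 n, ∀ᵐ ω ∂μ, (μ[X i|ℱ (i - 1)]) ω ≤ 0)
    (hexpint : ∀ i ∈ Finset.Icc 1 n, Integrable (fun ω => Real.exp |X i ω|) μ)
    (hcond : ∀ i ∈ Finset.Icc 1 n,
      ∀ᵐ ω ∂μ, (μ[fun ω' => Real.exp (|X i ω'|)|ℱ (i - 1)]) ω ≤ Kseq i) :
    ∀ K : ℝ, (∑ i ∈ Finset.Icc 1 n, Kseq i) / n ≤ K →
      (∀ t : ℝ, t ∈ Set.Ioo (0 : ℝ) 1 →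
        (∫⁻ ω, ENNReal.ofReal (Real.exp (t * ∑ i ∈ Finset.Icc 1 n, X i ω)) ∂μ) ≤
          ENNReal.ofReal (Real.exp (n * K * t ^ 2 / (1 - t)))) ∧
      (∀ x : ℝ, 0 < x →
        μ {ω | (∑ i ∈ Finset.Icc 1 n, X i ω) / n > x} ≤
          ENNReal.ofReal (Real.exp (-(n * (Real.sqrt (x + K) - Real.sqrt K) ^ 2)))) ∧
      (∀ x : ℝ, 0 < x → x ≤ K →
        μ {ω | (∑ i ∈ Finset.Icc 1 n, X i ω) / n > x} ≤
          ENNReal.ofReal (Real.exp (-(n * x ^ 2 / (K * (1 + Real.sqrt 2) ^ 2))))) ∧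
      (∀ x : ℝ, K < x →
        μ {ω | (∑ i ∈ Finset.Icc 1 n, X i ω) / n > x} ≤
          ENNReal.ofReal (Real.exp (-(n * x / (1 + Real.sqrt 2) ^ 2)))) := by
  intro K hK
  have hn0 : (0 : ℝ) < n := by exact_mod_cast hn
  have hsum_le : ∑ i ∈ Finset.Icc 1 n, Kseq i ≤ n * K := by
    rwa [div_le_iff₀ hn0, mul_comm] at hK
  have hK0 : 0 < K :=
    (div_pos (Finset.sum_pos hKpos ⟨1, Finset.left_mem_Icc.mpr hn⟩) hn0).trans_le hK
  have hmgf (t : ℝ) (ht : t ∈ Set.Ioo (0 : ℝ) 1) :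
      ∫⁻ ω, ENNReal.ofReal (Real.exp (t * ∑ i ∈ Finset.Icc 1 n, X i ω)) ∂μ ≤
        ENNReal.ofReal (Real.exp (n * K * t ^ 2 / (1 - t))) := by
    refine (lintegral_exp_mul_sum_le ℱ ht.1.le ht.2.le n hadp hint hsmg hexpint hcond).trans ?_
    gcongr
    calc t ^ 2 * ∑ i ∈ Finset.Icc 1 n, Kseq i ≤ n * K * t ^ 2 := by nlinarith
      _ ≤ n * K * t ^ 2 / (1 - t) :=
          le_div_self (by positivity) (by linarith [ht.2]) (by linarith [ht.1])
  have hS : AEMeasurable (fun ω ↦ ∑ i ∈ Finset.Icc 1 n, X i ω) μ :=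
    (Finset.stronglyMeasurable_fun_sum _ fun i hi ↦ (hadp i hi).mono (ℱ.le i)).aemeasurable
  have htail (x : ℝ) (hx : 0 < x) :
      μ {ω | (∑ i ∈ Finset.Icc 1 n, X i ω) / n > x} ≤
        ENNReal.ofReal (Real.exp (-(n * (√(x + K) - √K) ^ 2))) := by
    simp_rw [gt_iff_lt, lt_div_iff₀ hn0, mul_comm x]
    exact measure_mul_lt_le_exp_neg_sqrt_sub_sqrt_sq hS hK0 hx hmgf
  refine ⟨hmgf, htail, fun x hx hxK ↦ (htail x hx).trans ?_,
    fun x hxK ↦ (htail x (hK0.trans hxK)).trans ?_⟩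
  · gcongr
    rw [mul_div_assoc, mul_comm K]
    gcongr
    exact sq_div_le_sqrt_add_sub_sqrt_sq hx.le hK0.le hxK le_rfl
  · gcongr
    rw [mul_div_assoc, show x / (1 + √2) ^ 2 = x ^ 2 / ((1 + √2) ^ 2 * x) by field_simp]
    gcongr
    exact sq_div_le_sqrt_add_sub_sqrt_sq (hK0.trans hxK).le hK0.le le_rfl hxK.le
end
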